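/- arXiv:math/0004079 — 9 statements merged into one kernel-verified Lean document; each statement's English description precedes it below -/
import Mathlib

section
/- Let K be a field of characteristic zero, V a finite-dimensional K-vector space, m ≥ 1, and g(u) = g_m u^m + g_{m-1} u^{m-1} + ⋯ + g_0 ∈ End_K(V)[u] a polynomial with coefficients in End_K(V) whose leading coefficient g_m is invertible. Then for every h ∈ End_K(V)[u], the trace over K of the operator φ(h) : V[u]/gV[u] → V[u]/gV[u] equals −Tr_V(res_{u=∞}(g'(u)·g(u)^{-1}·h(u) du)); equivalently, Tr_K(φ(h)) equals the trace (as an element of End_K(V)) of the coefficient of u^{-1} in the formal Laurent expansion of g'(u)·g(u)^{-1}·h(u) in End_K(V)((u^{-1})). -/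
/-!
Write `X = g⁻¹h` and let `X_t` be its coefficient of `u^(-t)`. For `w ∈ V` and `j < m`, split
`X·u^j·w` into its polynomial part `Q` and its principal part `R`. Then `h·u^j·w = g·Q + g·R`, and
`g·R` is a polynomial of degree `< m`, so it is the remainder `φ(u^j·w)`; its coefficient of `u^i`
is `∑_{i < s ≤ m} g_s X_{j-i+s} w`. Hence the `j`-th diagonal block of `φ` is
`∑_{j < s ≤ m} g_s X_s`, and summing traces over `j < m` counts `tr(g_s X_s)` exactly `s` times:
this is `∑_s s·tr(g_s X_s)`, the `V`-trace of the `u⁻¹`-coefficient of `g'·X`.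
-/

open Polynomial

/-- The embedding of `R[u]` into the ring `R((u⁻¹))` of formal Laurent series in `u⁻¹`,
realized as Hahn series in the variable `T = u⁻¹`: the coefficient of `u^i` is placed
in degree `-i`.  The coefficient of `u⁻¹` of such a series `F` is `F.coeff 1`. -/
noncomputable def toLaurentAtInfinity {R : Type*} [Ring R] (p : Polynomial R) :
    LaurentSeries R :=
  p.sum fun i c => HahnSeries.single (-(i : ℤ)) c

/-- Multiplication of an element of `V[u]` (encoded as a finitely supported function
`ℕ →₀ V` of coefficients) by a polynomial `h ∈ End_K(V)[u]`. -/
noncomputable def polyMulAct {K V : Type*} [Field K] [AddCommGroup V] [Module K V]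
    (h : Polynomial (Module.End K V)) (P : ℕ →₀ V) : ℕ →₀ V :=
  h.sum fun i c => P.sum fun j v => Finsupp.single (i + j) (c v)

/-- The section `σ : V^m → V[u]` sending `(v_0, …, v_{m-1})` to `Σ v_i u^i`,
the unique representative of degree `< m` of a class in `V[u]/gV[u]`. -/
noncomputable def sigmaRep {V : Type*} [AddCommGroup V]
    (m : ℕ) (v : Fin m → V) : ℕ →₀ V :=
  ∑ i : Fin m, Finsupp.single (i : ℕ) (v i)

open Finset

section Trace

variable {R ι : Type*} [CommRing R] [Fintype ι] [DecidableEq ι] {M : ι → Type*}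
  [∀ i, AddCommGroup (M i)] [∀ i, Module R (M i)] [∀ i, Module.Free R (M i)]
  [∀ i, Module.Finite R (M i)]

theorem LinearMap.trace_pi_eq_sum (f : ((i : ι) → M i) →ₗ[R] ((i : ι) → M i)) :
    trace R ((i : ι) → M i) f = ∑ i, trace R (M i) (proj i ∘ₗ f ∘ₗ single R M i) := by
  have hf : f = ∑ i, (f ∘ₗ single R M i) ∘ₗ proj i := by
    ext i x j
    simp only [coe_comp, coe_single, Function.comp_apply, coe_sum, coe_proj, Finset.sum_apply,
      Function.eval]
    rw [← Finset.sum_apply, ← map_sum, Finset.univ_sum_single]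
  conv_lhs => rw [hf, map_sum]
  exact Finset.sum_congr rfl fun i _ => trace_comp_comm' _ _

end Trace

section Sums

variable {M : Type*} [AddCommMonoid M]

theorem Finset.sum_range_sum_Ioc (f : ℕ → M) (m : ℕ) :
    ∑ j ∈ range m, ∑ s ∈ Ioc j m, f s = ∑ s ∈ range m, (s + 1) • f (s + 1) := by
  induction m with
  | zero => simp
  | succ m ih =>
    rw [sum_range_succ, sum_congr rfl fun j hj => sum_Ioc_succ_top (mem_range.1 hj).le f,
      sum_add_distrib, ih, sum_const, card_range, Nat.Ioc_succ_singleton, sum_singleton,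
      sum_range_succ _ m, add_assoc, succ_nsmul]

theorem Finset.sum_range_eq_add_sum_Ioc {u : ℕ → M} {m : ℕ} (hu : ∀ s, m < s → u s = 0)
    (k : ℕ) : ∑ s ∈ range (m + 1), u s = ∑ s ∈ range (k + 1), u s + ∑ s ∈ Ioc k m, u s := by
  rcases le_or_gt k m with hkm | hmk
  · rw [← Ico_add_one_add_one_eq_Ioc, sum_range_add_sum_Ico _ (by omega)]
  · rw [Ioc_eq_empty_of_le hmk.le, sum_empty, add_zero]
    refine sum_subset (range_subset_range.2 (by omega)) fun s hs hs' => hu s ?_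
    simp only [mem_range] at hs hs'
    omega

end Sums

section LaurentAtInfinity

variable {R : Type*} [Ring R]

theorem toLaurentAtInfinity_eq_sum_range (p : R[X]) {n : ℕ} (hn : p.natDegree < n) :
    toLaurentAtInfinity p = ∑ s ∈ range n, HahnSeries.single (-(s : ℤ)) (p.coeff s) :=
  p.sum_over_range' (fun _ => map_zero _) n hn

theorem coeff_toLaurentAtInfinity_neg (p : R[X]) (n : ℕ) :
    (toLaurentAtInfinity p).coeff (-n) = p.coeff n := by
  rw [toLaurentAtInfinity_eq_sum_range p (n := p.natDegree + n + 1) (by omega),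
    HahnSeries.coeff_sum]
  simp only [HahnSeries.coeff_single, neg_inj, Nat.cast_inj]
  rw [sum_ite_eq, if_pos (mem_range.2 (by omega))]

theorem coeff_toLaurentAtInfinity_of_pos (p : R[X]) {t : ℤ} (ht : 0 < t) :
    (toLaurentAtInfinity p).coeff t = 0 := by
  rw [toLaurentAtInfinity_eq_sum_range p (Nat.lt_succ_self _), HahnSeries.coeff_sum]
  refine sum_eq_zero fun s _ => ?_
  rw [HahnSeries.coeff_single, if_neg (by omega)]

theorem coeff_toLaurentAtInfinity_mul (p : R[X]) {n : ℕ} (hn : p.natDegree < n)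
    (X : LaurentSeries R) (t : ℤ) :
    (toLaurentAtInfinity p * X).coeff t = ∑ s ∈ range n, p.coeff s * X.coeff (t + s) := by
  simp only [toLaurentAtInfinity_eq_sum_range p hn, sum_mul, HahnSeries.coeff_sum,
    HahnSeries.coeff_single_mul, sub_neg_eq_add]

end LaurentAtInfinity

section Division

variable {K V : Type*} [Field K] [AddCommGroup V] [Module K V]

theorem polyMulAct_apply (h : (Module.End K V)[X]) (P : ℕ →₀ V) (k : ℕ) :
    polyMulAct h P k = ∑ x ∈ antidiagonal k, h.coeff x.1 (P x.2) := by
  simp only [polyMulAct, Polynomial.sum_def, Finsupp.sum, Finsupp.finsetSum_apply,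
    Finsupp.single_apply]
  rw [← sum_product', ← sum_filter]
  refine sum_subset (fun x hx => ?_) fun x hxk hx => ?_
  · simp_all
  · simp only [mem_filter, mem_product, Polynomial.mem_support_iff, Finsupp.mem_support_iff] at hx
    by_contra hne
    exact hx ⟨⟨fun hc => hne (by rw [hc, LinearMap.zero_apply]),
      fun hP => hne (by rw [hP, map_zero])⟩, HasAntidiagonal.mem_antidiagonal.1 hxk⟩

theorem polyMulAct_sub (h : (Module.End K V)[X]) (P P' : ℕ →₀ V) :
    polyMulAct h (P - P') = polyMulAct h P - polyMulAct h P' := by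
  ext k
  simp only [polyMulAct_apply, Finsupp.coe_sub, Pi.sub_apply, map_sub, sum_sub_distrib]

theorem polyMulAct_single_apply (h : (Module.End K V)[X]) (j : ℕ) (w : V) (k : ℕ) :
    polyMulAct h (Finsupp.single j w) k = (toLaurentAtInfinity h).coeff (j - k) w := by
  rw [polyMulAct_apply]
  rcases le_or_gt j k with hjk | hkj
  · obtain ⟨n, rfl⟩ := Nat.exists_eq_add_of_le hjk
    rw [sum_eq_single (n, j), Finsupp.single_eq_same,
      show (j : ℤ) - (j + n : ℕ) = -n by push_cast; ring, coeff_toLaurentAtInfinity_neg]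
    · rintro ⟨a, b⟩ hab hne
      rw [HasAntidiagonal.mem_antidiagonal] at hab
      rw [Finsupp.single_eq_of_ne (by rintro rfl; exact hne (Prod.ext (by dsimp; omega) rfl)),
        map_zero]
    · simp [add_comm]
  · rw [coeff_toLaurentAtInfinity_of_pos _ (by omega), LinearMap.zero_apply]
    refine sum_eq_zero fun x hx => ?_
    rw [Finsupp.single_eq_of_ne, map_zero]
    rw [HasAntidiagonal.mem_antidiagonal] at hx
    omega

theorem sigmaRep_apply {m : ℕ} (v : Fin m → V) (k : ℕ) :
    sigmaRep m v k = if hk : k < m then v ⟨k, hk⟩ else 0 := by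
  simp only [sigmaRep, Finsupp.finsetSum_apply, Finsupp.single_apply]
  split_ifs with hk
  · rw [sum_eq_single ⟨k, hk⟩ (fun i _ hi => if_neg fun h => hi (Fin.ext h)) (by simp), if_pos rfl]
  · exact sum_eq_zero fun i _ => if_neg (by omega)

theorem sigmaRep_comp_val_apply {m : ℕ} {r : ℕ → V} (hr : ∀ k, m ≤ k → r k = 0) (k : ℕ) :
    sigmaRep m (fun i => r i) k = r k := by
  rw [sigmaRep_apply]
  split_ifs with hk
  · rfl
  · exact (hr k (not_lt.1 hk)).symm

theorem sigmaRep_single {m : ℕ} (j : Fin m) (w : V) :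
    sigmaRep m (Pi.single j w) = Finsupp.single (j : ℕ) w := by
  rw [sigmaRep, sum_eq_single j (fun i _ hi => by rw [Pi.single_eq_of_ne hi, Finsupp.single_zero])
    (by simp), Pi.single_eq_same]

theorem sigmaRep_injective (m : ℕ) : Function.Injective (sigmaRep (V := V) m) := by
  intro v v' hvv'
  ext i
  simpa [sigmaRep_apply] using DFunLike.congr_fun hvv' (i : ℕ)

theorem eq_zero_of_polyMulAct_eq_sigmaRep {m : ℕ} {g : (Module.End K V)[X]}
    (hdeg : g.natDegree ≤ m) (hunit : IsUnit (g.coeff m)) {P : ℕ →₀ V} {w : Fin m → V}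
    (hP : polyMulAct g P = sigmaRep m w) : P = 0 := by
  by_contra hP0
  set n := P.support.max' (Finsupp.support_nonempty_iff.2 hP0)
  have hn : P n ≠ 0 := Finsupp.mem_support_iff.1 (max'_mem _ _)
  have htop : polyMulAct g P (m + n) = g.coeff m (P n) := by
    rw [polyMulAct_apply, sum_eq_single (m, n)]
    · rintro ⟨a, b⟩ hab hne
      rw [HasAntidiagonal.mem_antidiagonal] at hab
      rcases lt_trichotomy a m with ham | rfl | ham
      · rw [Finsupp.notMem_support_iff.1 fun hb => ?_, map_zero]
        have := le_max' _ b hb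
        omega
      · obtain rfl : b = n := by omega
        exact absurd rfl hne
      · rw [Polynomial.coeff_eq_zero_of_natDegree_lt (by omega), LinearMap.zero_apply]
    · simp
  have : g.coeff m (P n) = 0 := by
    rw [← htop, hP, sigmaRep_apply, dif_neg (by omega)]
  exact hn ((map_eq_zero_iff _ ((Module.End.isUnit_iff _).1 hunit).injective).1 this)

theorem sigmaRep_sub (m : ℕ) (v v' : Fin m → V) :
    sigmaRep m (v - v') = sigmaRep m v - sigmaRep m v' := by
  simp only [sigmaRep, Pi.sub_apply, Finsupp.single_sub, sum_sub_distrib]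

theorem eq_of_polyMulAct_add_sigmaRep_eq {m : ℕ} {g : (Module.End K V)[X]}
    (hdeg : g.natDegree ≤ m) (hunit : IsUnit (g.coeff m)) {P P' : ℕ →₀ V} {v v' : Fin m → V}
    (h : polyMulAct g P + sigmaRep m v = polyMulAct g P' + sigmaRep m v') : v = v' := by
  have hP : P' - P = 0 := by
    refine eq_zero_of_polyMulAct_eq_sigmaRep hdeg hunit (w := v - v') ?_
    rw [polyMulAct_sub, sigmaRep_sub, sub_eq_sub_iff_add_eq_add, ← h, add_comm]
  rw [sub_eq_zero.1 hP] at h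
  exact sigmaRep_injective m (add_left_cancel h)

/-- The polynomial part of `X·u^j·w`, where `X.coeff t` is the coefficient of `u^(-t)`; its
coefficients of `u^k` with `k > j - X.order` vanish, which bounds the sum. -/
noncomputable def polyPartMulMonomial (X : LaurentSeries (Module.End K V)) (j : ℕ) (w : V) :
    ℕ →₀ V :=
  ∑ k ∈ range (j + 1 - X.order).toNat, Finsupp.single k (X.coeff (j - k) w)

theorem polyPartMulMonomial_apply (X : LaurentSeries (Module.End K V)) (j : ℕ) (w : V) (k : ℕ) :
    polyPartMulMonomial X j w k = X.coeff (j - k) w := by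
  simp only [polyPartMulMonomial, Finsupp.finsetSum_apply, Finsupp.single_apply, sum_ite_eq',
    mem_range]
  split_ifs with hk
  · rfl
  · rw [HahnSeries.coeff_eq_zero_of_lt_order (by omega), LinearMap.zero_apply]

theorem polyMulAct_single_eq_add_sigmaRep {m : ℕ} {g h : (Module.End K V)[X]}
    (hdeg : g.natDegree ≤ m) {X : LaurentSeries (Module.End K V)}
    (hX : toLaurentAtInfinity g * X = toLaurentAtInfinity h) (j : ℕ) (w : V) :
    polyMulAct h (Finsupp.single j w) = polyMulAct g (polyPartMulMonomial X j w) +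
      sigmaRep m (fun i => ∑ s ∈ Ioc (i : ℕ) m, g.coeff s (X.coeff (j - i + s) w)) := by
  ext k
  have hu : ∀ s, m < s → g.coeff s (X.coeff (j - k + s) w) = 0 := fun s hs => by
    rw [Polynomial.coeff_eq_zero_of_natDegree_lt (by omega), LinearMap.zero_apply]
  rw [Finsupp.add_apply, polyMulAct_single_apply, ← hX,
    coeff_toLaurentAtInfinity_mul g (n := m + 1) (by omega), polyMulAct_apply,
    Nat.sum_antidiagonal_eq_sum_range_succ (fun a b => g.coeff a (polyPartMulMonomial X j w b)),
    sigmaRep_comp_val_apply (r := fun k => ∑ s ∈ Ioc k m, g.coeff s (X.coeff (j - k + s) w))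
      (fun k hk => by rw [Ioc_eq_empty_of_le hk, sum_empty])]
  simp only [LinearMap.coe_sum, Finset.sum_apply, Module.End.mul_apply, polyPartMulMonomial_apply]
  rw [sum_range_eq_add_sum_Ioc hu k]
  congr 1
  refine sum_congr rfl fun s hs => ?_
  rw [Nat.cast_sub (Nat.lt_succ_iff.1 (mem_range.1 hs))]
  ring_nf

theorem apply_single_eq_sum_Ioc {m : ℕ} {g h : (Module.End K V)[X]}
    (hdeg : g.natDegree ≤ m) (hunit : IsUnit (g.coeff m)) {X : LaurentSeries (Module.End K V)}
    (hX : toLaurentAtInfinity g * X = toLaurentAtInfinity h)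
    {φ : (Fin m → V) →ₗ[K] (Fin m → V)}
    (hφ : ∀ v : Fin m → V, ∃ Q : ℕ →₀ V,
      polyMulAct h (sigmaRep m v) = polyMulAct g Q + sigmaRep m (φ v))
    (j : Fin m) (w : V) :
    φ (Pi.single j w) =
      fun i : Fin m => ∑ s ∈ Ioc (i : ℕ) m, g.coeff s (X.coeff (j - i + s) w) := by
  obtain ⟨Q, hQ⟩ := hφ (Pi.single j w)
  rw [sigmaRep_single, polyMulAct_single_eq_add_sigmaRep hdeg hX] at hQ
  exact (eq_of_polyMulAct_add_sigmaRep_eq hdeg hunit hQ).symm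

end Division

theorem statement0_general {K V : Type*} [Field K] [AddCommGroup V] [Module K V]
    [FiniteDimensional K V] (m : ℕ)
    (g : Polynomial (Module.End K V)) (hdeg : g.natDegree ≤ m)
    (hunit : IsUnit (g.coeff m))
    (h : Polynomial (Module.End K V))
    (φ : (Fin m → V) →ₗ[K] (Fin m → V))
    (hφ : ∀ v : Fin m → V, ∃ Q : ℕ →₀ V,
      polyMulAct h (sigmaRep m v) = polyMulAct g Q + sigmaRep m (φ v))
    (F : LaurentSeries (Module.End K V))
    (hF1 : toLaurentAtInfinity g * F = 1) :
    LinearMap.trace K (Fin m → V) φ =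
      LinearMap.trace K V
        ((toLaurentAtInfinity (derivative g) * F * toLaurentAtInfinity h).coeff 1) := by
  set X := F * toLaurentAtInfinity h
  have hX : toLaurentAtInfinity g * X = toLaurentAtInfinity h := by
    rw [← mul_assoc, hF1, one_mul]
  set f : ℕ → K := fun s => LinearMap.trace K V (g.coeff s * X.coeff s)
  have hblock (j : Fin m) : LinearMap.proj j ∘ₗ φ ∘ₗ LinearMap.single K (fun _ => V) j =
      ∑ s ∈ Ioc (j : ℕ) m, g.coeff s * X.coeff s := by
    ext w
    simp [apply_single_eq_sum_Ioc hdeg hunit hX hφ]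
  calc LinearMap.trace K (Fin m → V) φ
      = ∑ j ∈ range m, ∑ s ∈ Ioc j m, f s := by
        rw [LinearMap.trace_pi_eq_sum, ← Fin.sum_univ_eq_sum_range]
        simp only [hblock, map_sum, f]
    _ = ∑ s ∈ range (m + 1), (s + 1) • f (s + 1) := by
        rw [sum_range_sum_Ioc, sum_range_succ _ m]
        simp only [f, Polynomial.coeff_eq_zero_of_natDegree_lt (by omega : g.natDegree < m + 1),
          zero_mul, map_zero, smul_zero, add_zero]
    _ = LinearMap.trace K V ((toLaurentAtInfinity (derivative g) * X).coeff 1) := by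
        rw [coeff_toLaurentAtInfinity_mul _ (n := m + 1)
          ((natDegree_derivative_le g).trans_lt (by omega)), map_sum]
        refine sum_congr rfl fun s _ => ?_
        rw [coeff_derivative, ← Nat.cast_succ, ← nsmul_eq_mul', smul_mul_assoc, map_nsmul,
          add_comm (1 : ℤ)]
        rfl
    _ = _ := by rw [mul_assoc]

/-- **Noncommutative Euler trace formula (proposition 5.1/6.1 of Bloch–Esnault).**
Let `V` be a finite-dimensional `K`-vector space, `g = g_m u^m + ⋯ + g_0 ∈ End_K(V)[u]`
with `g_m` invertible, and `h ∈ End_K(V)[u]`.  Identify `V[u]/gV[u]` with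
`V ⊕ Vu ⊕ ⋯ ⊕ Vu^{m-1} ≅ (Fin m → V)` via degree `< m` representatives; `φ` is the
operator `p ∘ (mult. by h) ∘ σ` on this space, characterized by
`h·σ(v) = g·Q + σ(φ v)` for some `Q ∈ V[u]`.  If `F` is a (two-sided) inverse of `g` in
`End_K(V)((u⁻¹))`, then `Tr_K(φ) = −Tr_V(res_{u=∞}(g' g⁻¹ h du))`, i.e. `Tr_K(φ)` equals
the `V`-trace of the coefficient of `u⁻¹` in `g'(u)·g(u)⁻¹·h(u)`. -/
theorem statement0 {K V : Type*} [Field K] [CharZero K] [AddCommGroup V] [Module K V]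
    [FiniteDimensional K V] (m : ℕ) (hm : 1 ≤ m)
    (g : Polynomial (Module.End K V)) (hdeg : g.natDegree ≤ m)
    (hunit : IsUnit (g.coeff m))
    (h : Polynomial (Module.End K V))
    (φ : (Fin m → V) →ₗ[K] (Fin m → V))
    (hφ : ∀ v : Fin m → V, ∃ Q : ℕ →₀ V,
      polyMulAct h (sigmaRep m v) = polyMulAct g Q + sigmaRep m (φ v))
    (F : LaurentSeries (Module.End K V))
    (hF1 : toLaurentAtInfinity g * F = 1) (hF2 : F * toLaurentAtInfinity g = 1) :
    LinearMap.trace K (Fin m → V) φ =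
      LinearMap.trace K V
        ((toLaurentAtInfinity (derivative g) * F * toLaurentAtInfinity h).coeff 1) :=
  statement0_general m g hdeg hunit h φ hφ F hF1
end

section
/- Let K be a field of characteristic zero, r ≥ 1, m ≥ 1, and a_1, …, a_m ∈ M_r(K). Let g(u) = u^m + a_1 u^{m-1} + ⋯ + a_m and let M be the associated m×m block companion matrix with entries in M_r(K). Then for every integer p ≥ 0, the naive block trace Tr(M^p) ∈ M_r(K) equals the coefficient of u^{-1} in the formal Laurent expansion of g'(u)·g(u)^{-1}·u^p in M_r(K)((u^{-1})); equivalently, Tr(M^p) = −res_{u=∞}(g'(u)g(u)^{-1}u^p du), where res_{u=∞}(F du) := −(coefficient of u^{-1} in F). -/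
open Polynomial

/-- The block companion matrix of the monic polynomial
`g(u) = u^m + a 1 * u^(m-1) + ⋯ + a m` with coefficients in `M_r(K)`:
`M_{i+1,i} = 1` for `1 ≤ i ≤ m-1` (1-based), `M_{i,m} = -a (m+1-i)`, other entries `0`. -/
def blockCompanion {K : Type*} [Field K] (r m : ℕ) (a : ℕ → Matrix (Fin r) (Fin r) K) :
    Matrix (Fin m) (Fin m) (Matrix (Fin r) (Fin r) K) :=
  Matrix.of fun i j =>
    if (j : ℕ) + 1 = m then -a (m - (i : ℕ))
    else if (i : ℕ) = (j : ℕ) + 1 then 1 else 0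

/-
Let `F = g⁻¹` and `yᵢ = (divX^[i+1] g) · F` for `0 ≤ i < m`. Peeling off constant coefficients,
`q = u · divX q + q(0)`, so `u yᵢ = yᵢ₋₁ - gᵢ y_{m-1}` with `y₋₁ = g F = 1` and `y_{m-1} = F`
(as `divX^[m] g = 1`): that is `(u - M) y = e₀`, and `y` is the first column of `(u - M)⁻¹`.
Concretely, the coefficient vectors `Yₜ` of `y` satisfy `Yₜ₊₁ = M Yₜ + δₜ₀ e₀` and vanish for
`t ≪ 0`, whence `Yₙ₊₁ = Mⁿ e₀`. Since `Mʲ e₀ = eⱼ` for `j < m`, `(Mᵖ)ᵢᵢ = (Mᵖ⁺ⁱ)ᵢ₀` is the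
coefficient of `u^(-p-1)` in `uⁱ yᵢ`, and `∑ᵢ uⁱ divX^[i+1] g = g'` gives the claim.
-/

open scoped Matrix

section LaurentAtInfinity

variable {R : Type*} [Ring R]

theorem LaurentSeries.commute_single_one (a : ℤ) (x : LaurentSeries R) :
    Commute (HahnSeries.single a (1 : R)) x := by
  ext n
  rw [← sub_add_cancel n a, HahnSeries.coeff_single_mul_add, HahnSeries.coeff_mul_single_add,
    one_mul, mul_one]

theorem LaurentSeries.coeff_single_one_mul (b t : ℤ) (x : LaurentSeries R) :
    (HahnSeries.single b (1 : R) * x).coeff t = x.coeff (t - b) := by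
  conv_lhs => rw [← sub_add_cancel t b]
  rw [HahnSeries.coeff_single_mul_add, one_mul]

theorem LaurentSeries.eventually_coeff_eq_zero_atBot (x : LaurentSeries R) :
    ∀ᶠ t in Filter.atBot, x.coeff t = 0 :=
  Filter.eventually_atBot.2
    ⟨x.order - 1, fun _ ht => HahnSeries.coeff_eq_zero_of_lt_order (by omega)⟩

noncomputable def toLaurentAtInfinityRingHom : R[X] →+* LaurentSeries R :=
  eval₂RingHom' HahnSeries.C (HahnSeries.single (-1) 1) fun c =>
    (LaurentSeries.commute_single_one (-1) (HahnSeries.C c)).symm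

theorem toLaurentAtInfinityRingHom_apply (p : R[X]) :
    toLaurentAtInfinityRingHom p = toLaurentAtInfinity p := by
  rw [toLaurentAtInfinity, toLaurentAtInfinityRingHom, eval₂RingHom'_apply, eval₂_eq_sum]
  congr 1
  ext n c : 2
  rw [HahnSeries.single_pow, HahnSeries.C_apply, HahnSeries.single_mul_single, one_pow, mul_one,
    zero_add, smul_neg, nsmul_one]

theorem toLaurentAtInfinity_X_pow (n : ℕ) :
    toLaurentAtInfinity (X ^ n : R[X]) = HahnSeries.single (-(n : ℤ)) 1 := by
  rw [← toLaurentAtInfinityRingHom_apply, map_pow, toLaurentAtInfinityRingHom,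
    eval₂RingHom'_apply, eval₂_X, HahnSeries.single_pow, one_pow, smul_neg, nsmul_one]

theorem coeff_toLaurentAtInfinity_mul_s1 (q : R[X]) (F : LaurentSeries R) (t : ℤ) :
    (toLaurentAtInfinity q * F).coeff t =
      (toLaurentAtInfinity (divX q) * F).coeff (t + 1) + q.coeff 0 * F.coeff t := by
  conv_lhs => rw [← divX_mul_X_add q, ← toLaurentAtInfinityRingHom_apply]
  rw [map_add, map_mul, toLaurentAtInfinityRingHom_apply, add_mul, HahnSeries.coeff_add,
    toLaurentAtInfinityRingHom, eval₂RingHom'_apply, eval₂RingHom'_apply, eval₂_X, eval₂_C,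
    HahnSeries.C_mul_eq_smul, HahnSeries.coeff_smul, smul_eq_mul, mul_assoc,
    (LaurentSeries.commute_single_one _ _).symm.left_comm F,
    LaurentSeries.coeff_single_one_mul, sub_neg_eq_add]

end LaurentAtInfinity

section IterateDivX

variable {R : Type*} [Semiring R]

theorem Polynomial.coeff_iterate_divX (p : R[X]) (k n : ℕ) :
    (divX^[k] p).coeff n = p.coeff (n + k) := by
  induction k generalizing n with
  | zero => rfl
  | succ k ih => rw [Function.iterate_succ_apply', coeff_divX, ih, add_right_comm, add_assoc]

theorem Polynomial.iterate_divX_of_natDegree_le {p : R[X]} {k : ℕ} (h : p.natDegree ≤ k) :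
    divX^[k] p = C (p.coeff k) := by
  ext (_ | n)
  · rw [coeff_iterate_divX, zero_add, coeff_C_zero]
  · rw [coeff_iterate_divX, coeff_C_succ, coeff_eq_zero_of_natDegree_lt (by omega)]

theorem Polynomial.sum_X_pow_mul_iterate_divX {p : R[X]} {n : ℕ} (h : p.natDegree ≤ n) :
    ∑ i ∈ Finset.range n, X ^ i * divX^[i + 1] p = derivative p := by
  induction n generalizing p with
  | zero => rw [Finset.sum_range_zero, eq_C_of_natDegree_le_zero h, derivative_C]
  | succ n ih =>
    have hdeg : (divX p).natDegree ≤ n := by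
      rw [natDegree_divX_eq_natDegree_tsub_one]; omega
    conv_rhs => rw [← divX_mul_X_add p]
    rw [derivative_add, derivative_C, add_zero, derivative_mul, derivative_X, mul_one,
      ← ih hdeg, Finset.sum_range_succ', Finset.sum_mul, pow_zero, one_mul, Function.iterate_one]
    congr 1
    refine Finset.sum_congr rfl fun i _ => ?_
    rw [Function.iterate_succ_apply, mul_assoc, ← commute_X, ← mul_assoc, ← pow_succ]

theorem Polynomial.coeff_X_pow_add_sum_C_mul_X_pow (m : ℕ) (a : ℕ → R) (n : ℕ) :
    (X ^ m + ∑ j ∈ Finset.Icc 1 m, C (a j) * X ^ (m - j)).coeff n =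
      if n = m then 1 else if n < m then a (m - n) else 0 := by
  simp only [coeff_add, coeff_X_pow, finsetSum_coeff, coeff_C_mul, mul_ite, mul_one, mul_zero]
  by_cases hnm : n = m
  · rw [if_pos hnm, if_pos hnm, Finset.sum_eq_zero fun j hj => if_neg (by
      simp only [Finset.mem_Icc] at hj; omega), add_zero]
  rw [if_neg hnm, if_neg hnm, zero_add]
  by_cases hlt : n < m
  · rw [if_pos hlt, Finset.sum_eq_single_of_mem (m - n) (Finset.mem_Icc.2 (by omega))
      fun j hj _ => if_neg (by simp only [Finset.mem_Icc] at hj; omega), if_pos (by omega)]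
  · rw [if_neg hlt, Finset.sum_eq_zero fun j hj => if_neg (by
      simp only [Finset.mem_Icc] at hj; omega)]

end IterateDivX

section Resolvent

variable {R : Type*} [Ring R]

noncomputable def resolventColumnCoeff (m : ℕ) (g : R[X]) (F : LaurentSeries R) (t : ℤ) :
    Fin m → R :=
  fun i => (toLaurentAtInfinity (divX^[i + 1] g) * F).coeff t

theorem sum_resolventColumnCoeff {m : ℕ} {g : R[X]} (hdeg : g.natDegree ≤ m)
    (F : LaurentSeries R) (n : ℤ) :
    ∑ i : Fin m, resolventColumnCoeff m g F (n + i) i =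
      (toLaurentAtInfinity (derivative g) * F).coeff n := by
  rw [← sum_X_pow_mul_iterate_divX hdeg, ← toLaurentAtInfinityRingHom_apply, map_sum,
    Finset.sum_mul, HahnSeries.coeff_sum, ← Fin.sum_univ_eq_sum_range]
  refine Finset.sum_congr rfl fun i _ => ?_
  rw [map_mul, toLaurentAtInfinityRingHom_apply, toLaurentAtInfinityRingHom_apply,
    toLaurentAtInfinity_X_pow, mul_assoc, LaurentSeries.coeff_single_one_mul, sub_neg_eq_add]
  rfl

theorem Matrix.eq_pow_mulVec_of_recurrence {ι : Type*} [Fintype ι] [DecidableEq ι]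
    (M : Matrix ι ι R) (e : ι → R) (Y : ℤ → ι → R)
    (hY : ∀ t, Y (t + 1) = M *ᵥ Y t + if t = 0 then e else 0)
    (hbot : ∀ᶠ t in Filter.atBot, Y t = 0) (k : ℕ) :
    Y (k + 1) = (M ^ k) *ᵥ e := by
  obtain ⟨t₀, ht₀⟩ := Filter.eventually_atBot.1 hbot
  have hY0 : ∀ t ≤ 0, Y t = 0 := by
    have hup : ∀ s, t₀ ≤ s → s ≤ 0 → Y s = 0 := by
      intro s hs
      induction s, hs using Int.leInduction with
      | base => exact fun _ => ht₀ t₀ le_rfl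
      | succ s _ ih =>
        intro hs0
        rw [hY, ih (by omega), Matrix.mulVec_zero, if_neg (by omega), add_zero]
    exact fun t ht => (le_total t t₀).elim (ht₀ t) fun h => hup t h ht
  induction k with
  | zero =>
    rw [Nat.cast_zero, hY, hY0 0 le_rfl, Matrix.mulVec_zero, if_pos rfl, zero_add, pow_zero,
      Matrix.one_mulVec]
  | succ k ih =>
    rw [Nat.cast_succ, hY, ih, if_neg (by omega), add_zero, Matrix.mulVec_mulVec, ← pow_succ']

end Resolvent

section BlockCompanion

variable {K : Type*} [Field K] {r m : ℕ} (a : ℕ → Matrix (Fin r) (Fin r) K)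

theorem blockCompanion_mulVec_apply (c : ℕ → Matrix (Fin r) (Fin r) K) (i : Fin m) :
    (blockCompanion r m a *ᵥ fun k : Fin m => c (k + 1)) i =
      (if (i : ℕ) = 0 then 0 else c i) - a (m - i) * c m := by
  have hsplit : ∀ k : Fin m, blockCompanion r m a i k * c (k + 1) =
      (if (k : ℕ) = m - 1 then -(a (m - i) * c m) else 0) +
        (if (k : ℕ) + 1 = i then c i else 0) := by
    intro k
    simp only [blockCompanion, Matrix.of_apply]
    by_cases hlast : (k : ℕ) = m - 1
    · have hk : (k : ℕ) + 1 = m := by omega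
      rw [if_pos hk, if_pos hlast, if_neg (by omega), hk, add_zero, neg_mul]
    · rw [if_neg (by omega), if_neg hlast, zero_add]
      by_cases hik : (k : ℕ) + 1 = i
      · rw [if_pos hik.symm, if_pos hik, one_mul, hik]
      · rw [if_neg (Ne.symm hik), if_neg hik, zero_mul]
  rw [Matrix.mulVec, dotProduct, Finset.sum_congr rfl fun k _ => hsplit k, Finset.sum_add_distrib,
    Fin.sum_univ_eq_sum_range (fun k => if k = m - 1 then -(a (m - i) * c m) else 0),
    Fin.sum_univ_eq_sum_range (fun k => if k + 1 = (i : ℕ) then c i else 0),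
    Finset.sum_ite_eq' _ _ _, if_pos (Finset.mem_range.2 (Nat.sub_one_lt_of_lt i.isLt))]
  rcases Nat.eq_zero_or_pos (i : ℕ) with h0 | hpos
  · rw [if_pos h0, Finset.sum_eq_zero fun k _ => if_neg (by omega), add_zero, zero_sub]
  · rw [if_neg hpos.ne',
      Finset.sum_eq_single_of_mem ((i : ℕ) - 1) (Finset.mem_range.2 (by omega))
        fun k _ hk => if_neg (by omega), if_pos (by omega), neg_add_eq_sub]

theorem blockCompanion_pow_mulVec_basis {j : ℕ} (hj : j < m) :
    blockCompanion r m a ^ j *ᵥ (fun k : Fin m => if (k : ℕ) = 0 then 1 else 0) =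
      fun k : Fin m => if (k : ℕ) = j then (1 : Matrix (Fin r) (Fin r) K) else 0 := by
  induction j with
  | zero => rw [pow_zero, Matrix.one_mulVec]
  | succ j ih =>
    set c : ℕ → Matrix (Fin r) (Fin r) K := fun n => if n = j + 1 then 1 else 0
    have hshift : (fun k : Fin m => if (k : ℕ) = j then (1 : Matrix (Fin r) (Fin r) K) else 0) =
        fun k : Fin m => c (k + 1) := by
      simp only [c, Nat.add_right_cancel_iff]
    funext i
    rw [pow_succ', ← Matrix.mulVec_mulVec, ih (by omega), hshift, blockCompanion_mulVec_apply,
      show c m = 0 from if_neg (by omega), mul_zero, sub_zero]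
    simp only [c]
    split_ifs <;> first | rfl | omega

theorem blockCompanion_pow_apply_self (p : ℕ) (i : Fin m) :
    (blockCompanion r m a ^ p) i i =
      (blockCompanion r m a ^ (p + i) *ᵥ fun k : Fin m => if (k : ℕ) = 0 then 1 else 0) i := by
  rw [pow_add, ← Matrix.mulVec_mulVec, blockCompanion_pow_mulVec_basis a i.isLt]
  simp [Matrix.mulVec, dotProduct, Fin.val_inj]

variable {g : (Matrix (Fin r) (Fin r) K)[X]} {F : LaurentSeries (Matrix (Fin r) (Fin r) K)}

theorem resolventColumnCoeff_succ (hcoeff : ∀ i < m, g.coeff i = a (m - i))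
    (hmonic : divX^[m] g = 1) (hF : toLaurentAtInfinity g * F = 1) (t : ℤ) :
    resolventColumnCoeff m g F (t + 1) =
      blockCompanion r m a *ᵥ resolventColumnCoeff m g F t +
        if t = 0 then fun k : Fin m => if (k : ℕ) = 0 then 1 else 0 else 0 := by
  set c : ℕ → Matrix (Fin r) (Fin r) K :=
    fun k => (toLaurentAtInfinity (divX^[k] g) * F).coeff t
  have hcm : F.coeff t = c m := by
    simp only [c, hmonic, ← toLaurentAtInfinityRingHom_apply, map_one, one_mul]
  funext i
  have hstep := coeff_toLaurentAtInfinity_mul_s1 (divX^[i] g) F t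
  rw [coeff_iterate_divX, zero_add, hcoeff i i.isLt, hcm,
    ← Function.iterate_succ_apply' divX] at hstep
  unfold resolventColumnCoeff
  rw [Pi.add_apply, blockCompanion_mulVec_apply a c i, eq_sub_of_add_eq hstep.symm]
  by_cases hi : (i : ℕ) = 0
  · have hc0 : c 0 = if t = 0 then 1 else 0 := by
      simp only [c, Function.iterate_zero_apply, hF, HahnSeries.coeff_one]
      congr
    show c i - _ = _
    by_cases ht : t = 0 <;> simp [ht, hi, hc0, sub_eq_neg_add]
  · by_cases ht : t = 0 <;> simp [ht, hi, c]

theorem blockCompanion_pow_mulVec_eq_resolventColumnCoeff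
    (hcoeff : ∀ i < m, g.coeff i = a (m - i)) (hmonic : divX^[m] g = 1)
    (hF : toLaurentAtInfinity g * F = 1) (n : ℕ) :
    blockCompanion r m a ^ n *ᵥ (fun k : Fin m => if (k : ℕ) = 0 then 1 else 0) =
      resolventColumnCoeff m g F (n + 1) := by
  refine (Matrix.eq_pow_mulVec_of_recurrence _ _ _
    (resolventColumnCoeff_succ a hcoeff hmonic hF) ?_ n).symm
  refine (Filter.eventually_all.2 fun i => ?_).mono fun _ h => funext h
  exact LaurentSeries.eventually_coeff_eq_zero_atBot _

end BlockCompanion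

theorem statement1_general {K : Type*} [Field K] (r m : ℕ)
    (a : ℕ → Matrix (Fin r) (Fin r) K)
    (g : Polynomial (Matrix (Fin r) (Fin r) K))
    (hg : g = X ^ m + ∑ j ∈ Finset.Icc 1 m, C (a j) * X ^ (m - j))
    (F : LaurentSeries (Matrix (Fin r) (Fin r) K))
    (hF1 : toLaurentAtInfinity g * F = 1)
    (p : ℕ) :
    ∑ i : Fin m, (blockCompanion r m a ^ p) i i =
      (toLaurentAtInfinity (derivative g) * F * toLaurentAtInfinity (X ^ p)).coeff 1 := by
  have hcoeff := coeff_X_pow_add_sum_C_mul_X_pow m a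
  rw [← hg] at hcoeff
  have hdeg : g.natDegree ≤ m := natDegree_le_iff_coeff_eq_zero.2 fun n hn => by
    rw [hcoeff, if_neg hn.ne', if_neg hn.not_gt]
  have hmonic : divX^[m] g = 1 := by
    rw [iterate_divX_of_natDegree_le hdeg, hcoeff, if_pos rfl, C_1]
  have hres := blockCompanion_pow_mulVec_eq_resolventColumnCoeff a
    (fun i hi => by rw [hcoeff, if_neg hi.ne, if_pos hi]) hmonic hF1
  rw [toLaurentAtInfinity_X_pow, ← (LaurentSeries.commute_single_one _ _).eq,
    LaurentSeries.coeff_single_one_mul, sub_neg_eq_add, add_comm, ← sum_resolventColumnCoeff hdeg]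
  refine Finset.sum_congr rfl fun i _ => ?_
  rw [blockCompanion_pow_apply_self, hres]
  push_cast
  rw [add_right_comm]

/-- **Block trace of powers of a companion matrix via residues.**
For `g(u) = u^m + a 1 u^(m-1) + ⋯ + a m` with block companion matrix `M`, and any
(two-sided) inverse `F` of `g` in `M_r(K)((u⁻¹))`, for every `p ≥ 0` the naive block
trace `Tr(M^p) = ∑ i, (M^p) i i` equals the coefficient of `u⁻¹` in `g'(u)·g(u)⁻¹·u^p`,
i.e. `Tr(M^p) = −res_{u=∞}(g' g⁻¹ u^p du)`. -/
theorem statement1 {K : Type*} [Field K] [CharZero K] (r m : ℕ) (hr : 1 ≤ r) (hm : 1 ≤ m)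
    (a : ℕ → Matrix (Fin r) (Fin r) K)
    (g : Polynomial (Matrix (Fin r) (Fin r) K))
    (hg : g = X ^ m + ∑ j ∈ Finset.Icc 1 m, C (a j) * X ^ (m - j))
    (F : LaurentSeries (Matrix (Fin r) (Fin r) K))
    (hF1 : toLaurentAtInfinity g * F = 1) (hF2 : F * toLaurentAtInfinity g = 1)
    (p : ℕ) :
    ∑ i : Fin m, (blockCompanion r m a ^ p) i i =
      (toLaurentAtInfinity (derivative g) * F * toLaurentAtInfinity (X ^ p)).coeff 1 :=
  statement1_general r m a g hg F hF1 p
end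

section
/- Let K be a field of characteristic zero, r ≥ 1, m ≥ 1, and a_1, …, a_m ∈ M_r(K). Let M be the block companion matrix of g(u) = u^m + a_1 u^{m-1} + ⋯ + a_m and set c_p := Tr(M^p) ∈ M_r(K) (naive block trace) for p ≥ 1. Let G(z) = 1 + a_1 z + ⋯ + a_m z^m ∈ M_r(K)[[z]]. Then one has the identity of formal power series with matrix coefficients: −(c_1 + c_2 z + c_3 z^2 + ⋯)·G(z) = G'(z) = a_1 + 2a_2 z + ⋯ + m a_m z^{m-1} in M_r(K)[[z]]. -/
/-!
Work over an arbitrary ring `R`, with a companion matrix `M` of size `m + 1` (indices `0, …, m`),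
and let `N = ∑ₚ Mᵖ Xᵖ = (1 - X M)⁻¹`, so that `N = 1 + X N M`. Read column by column, this says
`N i j = δᵢⱼ + X N i (j+1)` for `j < m` and `N i m = δᵢₘ - X ∑ₖ N i k a (m+1-k)`.

For the row vector `S = (Xᵐ, …, X, 1) · N` the first relation solves to
`S k = X^(m-k) (S m + (m - k))`, and substituting this into the second one gives
`S m · G = G - X G'`. For a single row it gives `N i i = X^(m-i) N i m + [i ≠ m]`, so summing
the diagonal, `S m = ∑ᵢ N i i - m = 1 + X C` with `C = ∑ₚ tr (Mᵖ⁺¹) Xᵖ`.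
Hence `(1 + X C) G = G - X G'`, that is `-C G = G'`.
The coefficients never have to commute: only `X` and the integers are moved across them.
-/

section CompanionTrace

open PowerSeries Finset

variable {R : Type*} [Ring R]

def companion (m : ℕ) (a : ℕ → R) : Matrix (Fin m) (Fin m) R :=
  Matrix.of fun i j =>
    if (j : ℕ) + 1 = m then -a (m - (i : ℕ))
    else if (i : ℕ) = (j : ℕ) + 1 then 1 else 0

noncomputable def reciprocalSeries (m : ℕ) (a : ℕ → R) : R⟦X⟧ :=
  PowerSeries.mk fun n => if n = 0 then 1 else if n ≤ m then a n else 0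

noncomputable def derivReciprocalSeries (m : ℕ) (a : ℕ → R) : R⟦X⟧ :=
  PowerSeries.mk fun n => if n + 1 ≤ m then (n + 1) • a (n + 1) else 0

section Resolvent

variable {n : Type*} [Fintype n] [DecidableEq n]

noncomputable def resolventSeries (M : Matrix n n R) (i j : n) : R⟦X⟧ :=
  PowerSeries.mk fun p => (M ^ p) i j

theorem resolventSeries_eq (M : Matrix n n R) (i j : n) :
    resolventSeries M i j =
      (if i = j then 1 else 0) + X * ∑ k, resolventSeries M i k * C (M k j) := by
  ext (_ | p)
  · simp [resolventSeries, Matrix.one_apply]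
  · split_ifs <;> simp [resolventSeries, pow_succ, Matrix.mul_apply, coeff_one, coeff_mul_C]

theorem sum_resolventSeries_diag (M : Matrix n n R) :
    ∑ i, resolventSeries M i i =
      (Fintype.card n : R⟦X⟧) + X * PowerSeries.mk fun p => (M ^ (p + 1)).trace := by
  ext (_ | p)
  · simp [resolventSeries, Matrix.trace]
  · rw [map_add, ← map_natCast C, coeff_C, coeff_succ_X_mul]
    simp [resolventSeries, Matrix.trace]

end Resolvent

theorem sum_fin_reflect {M : Type*} [AddCommMonoid M] (m : ℕ) (f : ℕ → M) :
    ∑ k : Fin (m + 1), f (m - k) = ∑ k : Fin (m + 1), f k := by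
  rw [Fin.sum_univ_eq_sum_range (fun k => f (m - k)), Fin.sum_univ_eq_sum_range]
  exact sum_range_reflect f (m + 1)

theorem sum_X_pow_mul_C_eq_mk (m : ℕ) (f : ℕ → R) :
    ∑ j : Fin (m + 1), X ^ (j : ℕ) * C (f j) =
      PowerSeries.mk fun n => if n ≤ m then f n else 0 := by
  ext n
  simp only [map_sum, coeff_mul_C, coeff_X_pow, ite_mul, one_mul, zero_mul, coeff_mk]
  rw [Fin.sum_univ_eq_sum_range (fun j => if n = j then f j else 0), Finset.sum_ite_eq]
  simp

theorem reciprocalSeries_eq (m : ℕ) (a : ℕ → R) :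
    reciprocalSeries (m + 1) a = 1 + X * ∑ j : Fin (m + 1), X ^ (j : ℕ) * C (a (j + 1)) := by
  rw [sum_X_pow_mul_C_eq_mk m fun n => a (n + 1)]
  ext (_ | n) <;> simp [reciprocalSeries, coeff_one]

theorem derivReciprocalSeries_eq (m : ℕ) (a : ℕ → R) :
    derivReciprocalSeries (m + 1) a =
      ∑ j : Fin (m + 1), X ^ (j : ℕ) * C (a (j + 1)) +
        ∑ j : Fin (m + 1), (j : ℕ) • (X ^ (j : ℕ) * C (a (j + 1))) := by
  have hmk : derivReciprocalSeries (m + 1) a =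
      PowerSeries.mk fun n => if n ≤ m then (n + 1) • a (n + 1) else 0 := by
    simp only [derivReciprocalSeries, Nat.add_le_add_iff_right]
  rw [hmk, ← sum_X_pow_mul_C_eq_mk]
  simp only [succ_nsmul', map_add, map_nsmul, mul_add, mul_smul_comm, sum_add_distrib]

section Companion

variable (m : ℕ) (a : ℕ → R)

theorem companion_apply_castSucc (i : Fin (m + 1)) (j : Fin m) :
    companion (m + 1) a i j.castSucc = if i = j.succ then 1 else 0 := by
  simp [companion, Fin.ext_iff, j.isLt.ne]

theorem companion_apply_last (i : Fin (m + 1)) :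
    companion (m + 1) a i (Fin.last m) = -a (m + 1 - i) := by
  simp [companion]

local notation "N" => resolventSeries (companion (m + 1) a)

theorem resolventSeries_companion_castSucc (i : Fin (m + 1)) (j : Fin m) :
    N i j.castSucc = (if i = j.castSucc then 1 else 0) + X * N i j.succ := by
  rw [resolventSeries_eq]
  simp [companion_apply_castSucc, apply_ite C]

theorem resolventSeries_companion_last (i : Fin (m + 1)) :
    N i (Fin.last m) =
      (if i = Fin.last m then 1 else 0) - X * ∑ k, N i k * C (a (m + 1 - k)) := by
  rw [resolventSeries_eq]
  simp [companion_apply_last, sub_eq_add_neg]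

theorem resolventSeries_companion_of_lt {i k : Fin (m + 1)} (hik : i < k) :
    N i k = X ^ (m - k) * N i (Fin.last m) := by
  induction k using Fin.reverseInduction with
  | last => simp
  | cast j ih =>
    rw [resolventSeries_companion_castSucc, if_neg hik.ne, zero_add,
      ih (hik.trans Fin.castSucc_lt_succ), ← mul_assoc, ← pow_succ']
    congr 2
    simp only [Fin.val_succ, Fin.val_castSucc]
    omega

theorem resolventSeries_companion_diag (i : Fin (m + 1)) :
    N i i = X ^ (m - i) * N i (Fin.last m) + if i = Fin.last m then 0 else 1 := by
  induction i using Fin.lastCases with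
  | last => simp
  | cast j =>
    rw [resolventSeries_companion_castSucc, if_pos rfl, if_neg (Fin.castSucc_ne_last j),
      resolventSeries_companion_of_lt m a Fin.castSucc_lt_succ, ← mul_assoc, ← pow_succ',
      add_comm]
    congr 3
    simp only [Fin.val_succ, Fin.val_castSucc]
    omega

noncomputable def weightedRowSum (k : Fin (m + 1)) : R⟦X⟧ :=
  ∑ i : Fin (m + 1), X ^ (m - i) * N i k

theorem weightedRowSum_last_eq_trace :
    weightedRowSum m a (Fin.last m) =
      1 + X * PowerSeries.mk fun p => (companion (m + 1) a ^ (p + 1)).trace := by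
  have htrace := sum_resolventSeries_diag (companion (m + 1) a)
  simp only [resolventSeries_companion_diag, sum_add_distrib, Fintype.card_fin] at htrace
  have hcount : ∑ i : Fin (m + 1), (if i = Fin.last m then 0 else 1 : R⟦X⟧) = m := by
    simp [Fin.sum_univ_castSucc, Fin.castSucc_ne_last]
  rw [hcount, Nat.cast_succ] at htrace
  refine add_right_cancel (htrace.trans ?_)
  abel

theorem weightedRowSum_castSucc (j : Fin m) :
    weightedRowSum m a j.castSucc = X ^ (m - j) + X * weightedRowSum m a j.succ := by
  simp only [weightedRowSum, resolventSeries_companion_castSucc, mul_add, sum_add_distrib,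
    mul_ite, mul_one, mul_zero, sum_ite_eq', mem_univ, if_true, mul_sum, ← mul_assoc,
    pow_mul_comm', Fin.val_castSucc]

theorem weightedRowSum_last :
    weightedRowSum m a (Fin.last m) =
      1 - X * ∑ k, weightedRowSum m a k * C (a (m + 1 - k)) := by
  simp only [weightedRowSum, resolventSeries_companion_last, mul_sub, sum_sub_distrib,
    mul_ite, mul_one, mul_zero, sum_ite_eq', mem_univ, if_true, Fin.val_last, Nat.sub_self,
    pow_zero, mul_sum, sum_mul, ← mul_assoc, pow_mul_comm']
  rw [sum_comm]

theorem weightedRowSum_eq (k : Fin (m + 1)) :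
    weightedRowSum m a k =
      X ^ (m - k) * weightedRowSum m a (Fin.last m) + (m - k : ℕ) • X ^ (m - k) := by
  induction k using Fin.reverseInduction with
  | last => simp
  | cast j ih =>
    have hj : m - (j : ℕ) = m - (j.succ : ℕ) + 1 := by
      simp only [Fin.val_succ]
      omega
    rw [weightedRowSum_castSucc, ih, Fin.val_castSucc, hj, mul_add, ← mul_assoc, ← pow_succ',
      mul_smul_comm, ← pow_succ', succ_nsmul]
    abel

theorem weightedRowSum_last_mul :
    weightedRowSum m a (Fin.last m) * reciprocalSeries (m + 1) a =
      reciprocalSeries (m + 1) a - X * derivReciprocalSeries (m + 1) a := by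
  have hS := weightedRowSum_last m a
  set S := weightedRowSum m a (Fin.last m)
  have hsum : ∑ k, weightedRowSum m a k * C (a (m + 1 - k)) =
      ∑ j : Fin (m + 1), (X ^ (j : ℕ) * S + (j : ℕ) • X ^ (j : ℕ)) * C (a (j + 1)) := by
    refine (Fintype.sum_congr _ _ fun k => ?_).trans
      (sum_fin_reflect m fun j => (X ^ j * S + j • X ^ j) * C (a (j + 1)))
    rw [weightedRowSum_eq, Nat.sub_add_comm (Fin.is_le k)]
  have hS' : S = 1 - (S * (X * ∑ j : Fin (m + 1), X ^ (j : ℕ) * C (a (j + 1))) +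
      X * ∑ j : Fin (m + 1), (j : ℕ) • (X ^ (j : ℕ) * C (a (j + 1)))) := by
    refine hS.trans ?_
    simp only [hsum, add_mul, sum_add_distrib, mul_add, mul_sum, smul_mul_assoc, mul_smul_comm,
      mul_assoc, ← (commute_X_pow S _).left_comm, ← (commute_X S).left_comm]
  rw [reciprocalSeries_eq, derivReciprocalSeries_eq, mul_add, mul_one]
  nth_rewrite 1 [hS']
  rw [mul_add]
  abel

end Companion

theorem neg_traceSeries_mul_reciprocalSeries (m : ℕ) (a : ℕ → R) :
    -((PowerSeries.mk fun p => (companion m a ^ (p + 1)).trace) * reciprocalSeries m a) =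
      derivReciprocalSeries m a := by
  cases m with
  | zero =>
    ext n
    simp [derivReciprocalSeries, Matrix.trace, coeff_mul]
  | succ m =>
    have h := weightedRowSum_last_mul m a
    rw [weightedRowSum_last_eq_trace, add_mul, one_mul, mul_assoc, sub_eq_add_neg] at h
    apply X_mul_cancel
    rw [mul_neg, add_left_cancel h, neg_neg]

end CompanionTrace

theorem statement2_general {K : Type*} [Field K] (r m : ℕ)
    (a : ℕ → Matrix (Fin r) (Fin r) K) :
    -(PowerSeries.mk (fun n => ∑ i : Fin m, (blockCompanion r m a ^ (n + 1)) i i) *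
        PowerSeries.mk (fun n => if n = 0 then 1 else if n ≤ m then a n else 0)) =
      PowerSeries.mk (fun n => if n + 1 ≤ m then (n + 1) • a (n + 1) else 0) :=
  neg_traceSeries_mul_reciprocalSeries m a

/-- **Generating series identity for block traces of companion powers.**
With `c_p := Tr(M^p)` (naive block trace) and `G(z) = 1 + a_1 z + ⋯ + a_m z^m`, one has
`−(c_1 + c_2 z + c_3 z² + ⋯)·G(z) = G'(z) = a_1 + 2 a_2 z + ⋯ + m a_m z^(m-1)`
in the formal power series ring `M_r(K)[[z]]`. -/
theorem statement2 {K : Type*} [Field K] [CharZero K] (r m : ℕ) (hr : 1 ≤ r) (hm : 1 ≤ m)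
    (a : ℕ → Matrix (Fin r) (Fin r) K) :
    -(PowerSeries.mk (fun n => ∑ i : Fin m, (blockCompanion r m a ^ (n + 1)) i i) *
        PowerSeries.mk (fun n => if n = 0 then 1 else if n ≤ m then a n else 0)) =
      PowerSeries.mk (fun n => if n + 1 ≤ m then (n + 1) • a (n + 1) else 0) :=
  statement2_general r m a
end

section
/- Let K be a field of characteristic zero, r ≥ 1, m ≥ 1, and a_1, …, a_m ∈ M_r(K). Let M be the block companion matrix of g(u) = u^m + a_1 u^{m-1} + ⋯ + a_m, and let X = (x_{ij})_{1≤i,j≤m} be any m×m matrix with entries x_{ij} ∈ M_r(K). Then for every integer p ≥ 0, the naive block trace satisfies Tr(X M^p) = Σ_{q=0}^{p} (−1)^q Σ x_{i,i_1} a_{m_1} ⋯ a_{m_q}, where the inner sum runs over all indices with 1 ≤ i, i_1 ≤ m and all q-tuples (m_1, …, m_q) with 1 ≤ m_1, …, m_q ≤ m, subject to m_1 + ⋯ + m_q = p + i − i_1 and (when q ≥ 1) m_1 ≥ m − i_1 + 1; for q = 0 the product a_{m_1}⋯a_{m_q} is the identity and the conditions reduce to i_1 = p + i (with i_1 ≤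 m). -/
open Finset

section CompanionWordSum

variable (m : ℕ)

/-- `t` encodes the word `a_{t 0 + 1} ⋯ a_{t (q-1) + 1}` of a walk starting at the 0-based row `i₁`
whose length and endpoint add up to `s`. -/
def IsCompanionWord (i₁ s : ℕ) {q : ℕ} (t : Fin q → Fin m) : Prop :=
  (∑ k : Fin q, ((t k : ℕ) + 1)) + i₁ = s ∧ ∀ k : Fin q, (k : ℕ) = 0 → m ≤ (t k : ℕ) + i₁ + 1

instance (i₁ s : ℕ) {q : ℕ} (t : Fin q → Fin m) : Decidable (IsCompanionWord m i₁ s t) :=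
  inferInstanceAs (Decidable (_ ∧ _))

theorem isCompanionWord_snoc_iff {i₁ s q : ℕ} (y : Fin q → Fin m) (x : Fin m) :
    IsCompanionWord m i₁ (s + m) (Fin.snoc (α := fun _ => Fin m) y x) ↔
      IsCompanionWord m i₁ (s + (m - ((x : ℕ) + 1))) y := by
  simp only [IsCompanionWord, Fin.sum_univ_castSucc, Fin.snoc_castSucc, Fin.snoc_last]
  rw [show ∀ n : ℕ, n + (x + 1) + i₁ = s + m ↔ n + i₁ = s + (m - (x + 1)) by omega]
  refine and_congr_right fun hsum => ?_
  cases q with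
  | zero =>
    simp only [univ_eq_empty, sum_empty, zero_add] at hsum
    simp only [Fin.snoc_zero, IsEmpty.forall_iff, iff_true]
    omega
  | succ q => simp

variable {R : Type*} [Ring R] (a : ℕ → R)

def companionWordSum (i₁ s q : ℕ) : R :=
  ∑ t : Fin q → Fin m,
    if IsCompanionWord m i₁ s t then
      (-1 : ℤ) ^ q • (List.ofFn fun k : Fin q => a ((t k : ℕ) + 1)).prod
    else 0

theorem companionWordSum_zero (i₁ s : ℕ) :
    companionWordSum m a i₁ s 0 = if i₁ = s then 1 else 0 := by
  simp [companionWordSum, IsCompanionWord]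

theorem companionWordSum_succ_of_lt {i₁ s q : ℕ} (hs : s < m + q) :
    companionWordSum m a i₁ s (q + 1) = 0 := by
  refine sum_eq_zero fun t _ => if_neg ?_
  rintro ⟨hsum, hfirst⟩
  have hq : q ≤ ∑ k : Fin q, ((t k.succ : ℕ) + 1) := by
    simpa using card_nsmul_le_sum univ (fun k : Fin q => (t k.succ : ℕ) + 1) 1
      fun _ _ => Nat.le_add_left 1 _
  have hfirst := hfirst 0 rfl
  rw [Fin.sum_univ_succ] at hsum
  omega

theorem companionWordSum_succ (i₁ s q : ℕ) :
    companionWordSum m a i₁ (s + m) (q + 1) =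
      -∑ x : Fin m, companionWordSum m a i₁ (s + (m - ((x : ℕ) + 1))) q * a ((x : ℕ) + 1) := by
  rw [companionWordSum, ← (Fin.snocEquiv fun _ => Fin m).sum_comp, Fintype.sum_prod_type,
    ← sum_neg_distrib]
  refine sum_congr rfl fun x _ => ?_
  rw [companionWordSum, sum_mul, ← sum_neg_distrib]
  refine sum_congr rfl fun y _ => ?_
  have hsnoc : (Fin.snocEquiv fun _ => Fin m) (x, y) = Fin.snoc y x := rfl
  simp only [hsnoc, isCompanionWord_snoc_iff]
  split_ifs
  · rw [List.ofFn_succ', List.prod_concat]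
    simp only [Fin.snoc_castSucc, Fin.snoc_last]
    rw [pow_succ, mul_neg_one, neg_smul, smul_mul_assoc]
  · rw [zero_mul, neg_zero]

end CompanionWordSum

section BlockCompanion

variable {K : Type*} [Field K] {r m : ℕ} (a : ℕ → Matrix (Fin r) (Fin r) K)
  (N : Matrix (Fin m) (Fin m) (Matrix (Fin r) (Fin r) K))

theorem mul_blockCompanion_apply_of_succ_lt (i₁ i : Fin m) (hi : (i : ℕ) + 1 < m) :
    (N * blockCompanion r m a) i₁ i = N i₁ ⟨i + 1, hi⟩ := by
  rw [Matrix.mul_apply, sum_eq_single ⟨i + 1, hi⟩]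
  · simp [blockCompanion, hi.ne]
  · intro j _ hj
    simp [blockCompanion, hi.ne, Fin.ext_iff.not.mp hj]
  · simp

theorem mul_blockCompanion_apply_of_succ_eq (i₁ i : Fin m) (hi : (i : ℕ) + 1 = m) :
    (N * blockCompanion r m a) i₁ i = -∑ x : Fin m, N i₁ x.rev * a ((x : ℕ) + 1) := by
  rw [Matrix.mul_apply, ← Equiv.sum_comp Fin.revPerm, ← sum_neg_distrib]
  refine sum_congr rfl fun x _ => ?_
  have hx : m - (m - ((x : ℕ) + 1)) = x + 1 := by omega
  simp [blockCompanion, hi, hx]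

theorem blockCompanion_pow_apply (p : ℕ) (i₁ i : Fin m) :
    (blockCompanion r m a ^ p) i₁ i =
      ∑ q ∈ range (p + 1), companionWordSum m a i₁ (p + i) q := by
  induction p generalizing i with
  | zero => simp [companionWordSum_zero, Matrix.one_apply, Fin.ext_iff]
  | succ p ih =>
    rw [pow_succ]
    by_cases hi : (i : ℕ) + 1 < m
    · rw [mul_blockCompanion_apply_of_succ_lt _ _ _ _ hi, ih, sum_range_succ _ (p + 1),
        companionWordSum_succ_of_lt _ _ (by omega), add_zero,
        show p + 1 + (i : ℕ) = p + ((i : ℕ) + 1) by omega]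
    · have hi : (i : ℕ) + 1 = m := by omega
      rw [mul_blockCompanion_apply_of_succ_eq _ _ _ _ hi, sum_range_succ', companionWordSum_zero,
        if_neg (by omega), add_zero, show p + 1 + (i : ℕ) = p + m by omega]
      simp only [ih, Fin.val_rev, sum_mul, companionWordSum_succ]
      rw [sum_comm, sum_neg_distrib]

end BlockCompanion

theorem statement3_general {K : Type*} [Field K] (r m : ℕ)
    (a : ℕ → Matrix (Fin r) (Fin r) K)
    (Xm : Matrix (Fin m) (Fin m) (Matrix (Fin r) (Fin r) K)) (p : ℕ) :
    ∑ i : Fin m, (Xm * blockCompanion r m a ^ p) i i =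
      ∑ q ∈ Finset.range (p + 1), ∑ i : Fin m, ∑ i₁ : Fin m, ∑ t : Fin q → Fin m,
        if (∑ k : Fin q, ((t k : ℕ) + 1)) + (i₁ : ℕ) = p + (i : ℕ) ∧
            (∀ k : Fin q, (k : ℕ) = 0 → m ≤ (t k : ℕ) + (i₁ : ℕ) + 1) then
          (-1 : K) ^ q • (Xm i i₁ * (List.ofFn fun k : Fin q => a ((t k : ℕ) + 1)).prod)
        else 0 := by
  have hsign (q : ℕ) (M : Matrix (Fin r) (Fin r) K) : (-1 : ℤ) ^ q • M = (-1 : K) ^ q • M := by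
    rw [← Int.cast_smul_eq_zsmul K]; simp
  simp only [Matrix.mul_apply, blockCompanion_pow_apply, companionWordSum, mul_sum, mul_ite,
    mul_zero, mul_smul_comm, hsign]
  exact (sum_congr rfl fun i _ => sum_comm).trans sum_comm

/-- **Lemma 6.2 of Bloch–Esnault.**
For any `m×m` matrix `Xm` with entries in `M_r(K)` and any `p ≥ 0`,
`Tr(Xm·M^p) = Σ_{q=0}^{p} (−1)^q Σ x_{i,i₁} a_{m₁} ⋯ a_{m_q}`, the inner sum running over
`1 ≤ i, i₁ ≤ m` and tuples `(m₁, …, m_q)` with `1 ≤ m_k ≤ m`, `Σ m_k = p + i − i₁`, and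
(when `q ≥ 1`) `m₁ ≥ m − i₁ + 1`.  Here `i, i₁` are 1-based: the row `i` corresponds to
`(i0 : Fin m)` with `i = i0 + 1`, the index `m_k` to `(t k : Fin m)` with `m_k = t k + 1`,
so the constraints read `Σ (t k + 1) + i₁0 = p + i0` and `m ≤ t 0 + i₁0 + 1`. -/
theorem statement3 {K : Type*} [Field K] [CharZero K] (r m : ℕ) (hr : 1 ≤ r) (hm : 1 ≤ m)
    (a : ℕ → Matrix (Fin r) (Fin r) K)
    (Xm : Matrix (Fin m) (Fin m) (Matrix (Fin r) (Fin r) K)) (p : ℕ) :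
    ∑ i : Fin m, (Xm * blockCompanion r m a ^ p) i i =
      ∑ q ∈ Finset.range (p + 1), ∑ i : Fin m, ∑ i₁ : Fin m, ∑ t : Fin q → Fin m,
        if (∑ k : Fin q, ((t k : ℕ) + 1)) + (i₁ : ℕ) = p + (i : ℕ) ∧
            (∀ k : Fin q, (k : ℕ) = 0 → m ≤ (t k : ℕ) + (i₁ : ℕ) + 1) then
          (-1 : K) ^ q • (Xm i i₁ * (List.ofFn fun k : Fin q => a ((t k : ℕ) + 1)).prod)
        else 0 :=
  statement3_general r m a Xm p
end

section
/- Let K be a field of characteristic zero, r ≥ 1, m ≥ 1, and a_1, …, a_m ∈ M_r(K). Let M be the block companion matrix of g(u) = u^m + a_1 u^{m-1} + ⋯ + a_m. Then for every integer p ≥ 1, the naive block trace satisfies Tr(M^p) = Σ_{q=1}^{p} (−1)^q Σ a_{m_1} ⋯ a_{m_q}, where the inner sum runs over all indices 1 ≤ i ≤ m and all q-tuples (m_1, …, m_q) with 1 ≤ m_1, …, m_q ≤ m, subject to m_1 + ⋯ + m_q = p and m_1 ≥ m − i + 1 (so each tuple (m_1,…,m_q) with Σ m_k = p is counted once for every i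 with m − m_1 + 1 ≤ i ≤ m). -/
section BE
variable {K : Type*} [Field K] (r m : ℕ) (a : ℕ → Matrix (Fin r) (Fin r) K)

lemma sum_Icc_one {β : Type*} [AddCommMonoid β] (n : ℕ) (F : ℕ → β) :
    ∑ q ∈ Finset.Icc 1 n, F q = ∑ k ∈ Finset.range n, F (k + 1) := by
  rw [show Finset.Icc 1 n = Finset.Ico 1 (n+1) by rw [Finset.Ico_add_one_right_eq_Icc]]
  rw [Finset.sum_Ico_eq_sum_range]
  simp [Nat.add_comm]

noncomputable def EntS (p i j q : ℕ) : Matrix (Fin r) (Fin r) K :=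
  ∑ t : Fin q → Fin m,
    if (∑ k : Fin q, ((t k : ℕ) + 1)) + i = p + j ∧
        (∀ k : Fin q, (k : ℕ) = 0 → m ≤ (t k : ℕ) + i + 1) then
      (-1 : K) ^ q • (List.ofFn fun k : Fin q => a ((t k : ℕ) + 1)).prod
    else 0

noncomputable def Ent (p i j : ℕ) : Matrix (Fin r) (Fin r) K :=
  (if i = j + p then 1 else 0) + ∑ q ∈ Finset.Icc 1 p, EntS r m a p i j q

noncomputable def P (k : ℕ) (s : Fin k → Fin m) : Matrix (Fin r) (Fin r) K :=
  (List.ofFn fun k' : Fin k => a ((s k' : ℕ) + 1)).prod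

lemma cons_split (p i j k : ℕ) :
    EntS r m a p i j (k+1) =
      ∑ x : Fin m, ∑ s : Fin k → Fin m,
        if ((x : ℕ) + 1) + (∑ k' : Fin k, ((s k' : ℕ) + 1)) + i = p + j ∧
            m ≤ (x : ℕ) + i + 1 then
          (-1 : K) ^ (k+1) • (a ((x : ℕ) + 1) * P r m a k s)
        else 0 := by
  rw [EntS, ← Equiv.sum_comp (Fin.consEquiv fun _ => Fin m), Fintype.sum_prod_type]
  refine Finset.sum_congr rfl fun x _ => Finset.sum_congr rfl fun s _ => ?_
  have h1 : (∑ k' : Fin (k+1), (((Fin.consEquiv fun _ => Fin m) (x, s) k' : ℕ) + 1))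
      = ((x : ℕ) + 1) + ∑ k' : Fin k, ((s k' : ℕ) + 1) := by
    rw [Fin.sum_univ_succ]; simp [Fin.consEquiv]
  have h2 : (∀ k' : Fin (k+1), (k' : ℕ) = 0 →
      m ≤ (((Fin.consEquiv fun _ => Fin m) (x, s) k' : ℕ)) + i + 1) ↔ m ≤ (x : ℕ) + i + 1 := by
    constructor
    · intro h; simpa [Fin.consEquiv] using h 0 rfl
    · intro h k' hk'
      have : k' = 0 := Fin.ext hk'
      subst this; simpa [Fin.consEquiv] using h
  have h3 : (List.ofFn fun k' : Fin (k+1) =>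
        a (((Fin.consEquiv fun _ => Fin m) (x, s) k' : ℕ) + 1)).prod
      = a ((x : ℕ) + 1) * P r m a k s := by
    rw [List.ofFn_succ, List.prod_cons]; simp [Fin.consEquiv, P]
  rw [h1, h3]
  exact if_congr (and_congr Iff.rfl h2) rfl rfl

lemma smul_fact (k : ℕ) (b c : Matrix (Fin r) (Fin r) K) :
    (-1 : K) ^ (k+1) • (b * c) = (-b) * ((-1 : K) ^ k • c) := by
  rw [mul_smul_comm, neg_mul, smul_neg, pow_succ, mul_neg_one, neg_smul]

lemma entS_split (p i j k : ℕ) (hm : 1 ≤ m) (him : i < m) :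
    EntS r m a (p+1) i j (k+1) =
      (if 1 ≤ i then EntS r m a p (i-1) j (k+1) else 0)
        + (-(a (m - i))) * EntS r m a p (m-1) j k := by
  rw [cons_split]
  have split : ∀ x : Fin m, ∀ s : Fin k → Fin m,
      (if ((x : ℕ) + 1) + (∑ k' : Fin k, ((s k' : ℕ) + 1)) + i = (p+1) + j ∧
          m ≤ (x : ℕ) + i + 1 then
        (-1 : K) ^ (k+1) • (a ((x : ℕ) + 1) * P r m a k s) else 0)
      = (if ((x : ℕ) + 1) + (∑ k' : Fin k, ((s k' : ℕ) + 1)) + i = (p+1) + j ∧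
          m + 1 ≤ (x : ℕ) + i + 1 then
        (-1 : K) ^ (k+1) • (a ((x : ℕ) + 1) * P r m a k s) else 0)
      + (if ((x : ℕ) + 1) + (∑ k' : Fin k, ((s k' : ℕ) + 1)) + i = (p+1) + j ∧
          (x : ℕ) + i + 1 = m then
        (-1 : K) ^ (k+1) • (a ((x : ℕ) + 1) * P r m a k s) else 0) := by
    intro x s
    split_ifs with h1 h2 h3 h2 h3 h3 <;> first
      | (exfalso; omega) | simp | (rw [self_eq_add_left]) | (rw [left_eq_add]) | rfl
  calc (∑ x : Fin m, ∑ s : Fin k → Fin m,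
        if ((x : ℕ) + 1) + (∑ k' : Fin k, ((s k' : ℕ) + 1)) + i = (p+1) + j ∧
            m ≤ (x : ℕ) + i + 1 then
          (-1 : K) ^ (k+1) • (a ((x : ℕ) + 1) * P r m a k s) else 0)
      = (∑ x : Fin m, ∑ s : Fin k → Fin m,
          ((if ((x : ℕ) + 1) + (∑ k' : Fin k, ((s k' : ℕ) + 1)) + i = (p+1) + j ∧
              m + 1 ≤ (x : ℕ) + i + 1 then
            (-1 : K) ^ (k+1) • (a ((x : ℕ) + 1) * P r m a k s) else 0)
          + (if ((x : ℕ) + 1) + (∑ k' : Fin k, ((s k' : ℕ) + 1)) + i = (p+1) + j ∧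
              (x : ℕ) + i + 1 = m then
            (-1 : K) ^ (k+1) • (a ((x : ℕ) + 1) * P r m a k s) else 0))) :=
        Finset.sum_congr rfl fun x _ => Finset.sum_congr rfl fun s _ => split x s
    _ = (∑ x : Fin m, ∑ s : Fin k → Fin m,
          (if ((x : ℕ) + 1) + (∑ k' : Fin k, ((s k' : ℕ) + 1)) + i = (p+1) + j ∧
              m + 1 ≤ (x : ℕ) + i + 1 then
            (-1 : K) ^ (k+1) • (a ((x : ℕ) + 1) * P r m a k s) else 0))
        + (∑ x : Fin m, ∑ s : Fin k → Fin m,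
          (if ((x : ℕ) + 1) + (∑ k' : Fin k, ((s k' : ℕ) + 1)) + i = (p+1) + j ∧
              (x : ℕ) + i + 1 = m then
            (-1 : K) ^ (k+1) • (a ((x : ℕ) + 1) * P r m a k s) else 0)) :=
        (Finset.sum_congr rfl fun x _ => Finset.sum_add_distrib).trans
          Finset.sum_add_distrib
    _ = _ := ?_
  congr 1
  · -- descent part
    by_cases hi : 1 ≤ i
    · rw [if_pos hi, cons_split]
      refine Finset.sum_congr rfl fun x _ => Finset.sum_congr rfl fun s _ => ?_
      exact if_congr (by constructor <;> (rintro ⟨h1, h2⟩; exact ⟨by omega, by omega⟩)) rfl rfl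
    · rw [if_neg hi]
      refine Finset.sum_eq_zero fun x _ => Finset.sum_eq_zero fun s _ => ?_
      rw [if_neg]
      rintro ⟨-, h2⟩
      have := x.isLt; omega
  · -- jump part
    rw [Finset.sum_eq_single (⟨m - 1 - i, by omega⟩ : Fin m)]
    · rw [EntS, Finset.mul_sum]
      refine Finset.sum_congr rfl fun s _ => ?_
      rw [mul_ite, mul_zero]
      have hx : ((⟨m - 1 - i, by omega⟩ : Fin m) : ℕ) = m - 1 - i := rfl
      rw [show m - 1 - i + 1 = m - i by omega, smul_fact]
      refine if_congr ?_ rfl rfl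
      constructor
      · rintro ⟨h1, -⟩
        exact ⟨by omega, fun k' _ => by omega⟩
      · rintro ⟨h1, -⟩
        exact ⟨by omega, by omega⟩
    · intro x _ hx
      refine Finset.sum_eq_zero fun s _ => ?_
      rw [if_neg]
      rintro ⟨-, h2⟩
      exact hx (Fin.ext (by simp; omega))
    · simp


lemma entS_zero (p i j : ℕ) :
    EntS r m a p i j 0 = if i = j + p then 1 else 0 := by
  rw [EntS]
  rw [Finset.sum_eq_single (finZeroElim : Fin 0 → Fin m)]
  · simp only [Finset.univ_eq_empty, Finset.sum_empty, pow_zero, List.ofFn_zero,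
      List.prod_nil, one_smul]
    refine if_congr ?_ rfl rfl
    constructor
    · rintro ⟨h, -⟩; omega
    · intro h; exact ⟨by omega, fun k _ => k.elim0⟩
  · intro b _ hb; exact absurd (funext fun k => k.elim0) hb
  · intro h; exact absurd (Finset.mem_univ _) h

lemma entS_top_zero (p i j : ℕ) (hjm : j < m) : EntS r m a p i j (p+1) = 0 := by
  rw [EntS]
  refine Finset.sum_eq_zero fun t _ => ?_
  rw [if_neg]
  rintro ⟨h1, h2⟩
  have h2' := h2 0 rfl
  have h3 : (∑ k : Fin (p+1), ((t k : ℕ)+1)) = ((t 0 : ℕ)+1) + ∑ k : Fin p, ((t k.succ : ℕ)+1) :=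
    Fin.sum_univ_succ _
  have h4 : p ≤ ∑ k : Fin p, ((t k.succ : ℕ)+1) := by
    calc p = (Finset.univ : Finset (Fin p)).card • 1 := by simp
    _ ≤ _ := Finset.card_nsmul_le_sum _ _ _ (fun x _ => by omega)
  omega

lemma ent_rec (p i j : ℕ) (hm : 1 ≤ m) (him : i < m) (hjm : j < m) :
    Ent r m a (p+1) i j = (if 1 ≤ i then Ent r m a p (i-1) j else 0)
      + (-(a (m - i))) * Ent r m a p (m-1) j := by
  rw [Ent, sum_Icc_one]
  have step1 : (∑ k ∈ Finset.range (p+1), EntS r m a (p+1) i j (k+1))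
      = (∑ k ∈ Finset.range (p+1), (if 1 ≤ i then EntS r m a p (i-1) j (k+1) else 0))
        + (∑ k ∈ Finset.range (p+1), (-(a (m - i))) * EntS r m a p (m-1) j k) := by
    rw [← Finset.sum_add_distrib]
    exact Finset.sum_congr rfl fun k _ => entS_split r m a p i j k hm him
  rw [step1]
  have step2 : (∑ k ∈ Finset.range (p+1), (if 1 ≤ i then EntS r m a p (i-1) j (k+1) else 0))
      = if 1 ≤ i then (∑ k ∈ Finset.range (p+1), EntS r m a p (i-1) j (k+1)) else 0 := by
    split_ifs <;> simp
  rw [step2]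
  have step3 : (∑ k ∈ Finset.range (p+1), EntS r m a p (i-1) j (k+1))
      = ∑ q ∈ Finset.Icc 1 p, EntS r m a p (i-1) j q := by
    rw [Finset.sum_range_succ, entS_top_zero r m a p (i-1) j hjm, add_zero, sum_Icc_one]
  rw [step3]
  have step4 : (∑ k ∈ Finset.range (p+1), (-(a (m - i))) * EntS r m a p (m-1) j k)
      = (-(a (m - i))) * Ent r m a p (m-1) j := by
    rw [← Finset.mul_sum, Finset.sum_range_succ', entS_zero, Ent, sum_Icc_one, add_comm]
  rw [step4]
  have step5 : (if i = j + (p+1) then (1 : Matrix (Fin r) (Fin r) K) else 0)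
      = if 1 ≤ i then (if i - 1 = j + p then (1 : Matrix (Fin r) (Fin r) K) else 0) else 0 := by
    split_ifs <;> first | rfl | omega
  rw [step5, Ent, ← add_assoc, ite_add_ite, add_zero]
  rfl

lemma bc_apply (hm : 1 ≤ m) (i k : Fin m) : blockCompanion r m a i k =
    (if (k : ℕ) + 1 = m then -(a (m - (i : ℕ))) else 0)
      + (if (i : ℕ) = (k : ℕ) + 1 then 1 else 0) := by
  have hi := i.isLt
  simp only [blockCompanion, Matrix.of_apply]
  split_ifs with h1 h2 <;> first | (exfalso; omega) | simp

lemma row_sum (hm : 1 ≤ m) (i : Fin m) (X : Fin m → Matrix (Fin r) (Fin r) K) :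
    ∑ k : Fin m, blockCompanion r m a i k * X k
      = (if 1 ≤ (i : ℕ) then X ⟨(i : ℕ) - 1, by omega⟩ else 0)
        + (-(a (m - (i : ℕ)))) * X ⟨m - 1, by omega⟩ := by
  have hterm : ∀ k : Fin m, blockCompanion r m a i k * X k
      = (if (k : ℕ) + 1 = m then -(a (m - (i : ℕ))) * X k else 0)
        + (if (i : ℕ) = (k : ℕ) + 1 then X k else 0) := by
    intro k
    rw [bc_apply r m a hm, add_mul]
    split_ifs <;> simp
  rw [Finset.sum_congr rfl fun k _ => hterm k, Finset.sum_add_distrib, add_comm]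
  congr 1
  · by_cases hi : 1 ≤ (i : ℕ)
    · rw [if_pos hi, Finset.sum_eq_single (⟨(i : ℕ) - 1, by omega⟩ : Fin m)]
      · rw [if_pos (by simp; omega)]
      · intro b _ hb
        rw [if_neg]
        intro h
        exact hb (Fin.ext (show (b:ℕ) = (i:ℕ) - 1 by omega))
      · simp
    · rw [if_neg hi]
      refine Finset.sum_eq_zero fun k _ => ?_
      rw [if_neg]; omega
  · rw [Finset.sum_eq_single (⟨m - 1, by omega⟩ : Fin m)]
    · rw [if_pos (by simp; omega)]
    · intro b _ hb
      rw [if_neg]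
      intro h; exact hb (Fin.ext (by simp; omega))
    · simp

lemma pow_ent (hm : 1 ≤ m) (p : ℕ) (i j : Fin m) :
    (blockCompanion r m a ^ p) i j = Ent r m a p (i : ℕ) (j : ℕ) := by
  induction p generalizing i j with
  | zero =>
    rw [pow_zero, Matrix.one_apply, Ent]
    rw [show Finset.Icc 1 0 = (∅ : Finset ℕ) from Finset.Icc_eq_empty (by omega),
      Finset.sum_empty, add_zero]
    exact if_congr (by rw [Fin.ext_iff]; omega) rfl rfl
  | succ p ih =>
    rw [pow_succ', Matrix.mul_apply]
    rw [row_sum r m a hm i (fun k => (blockCompanion r m a ^ p) k j)]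
    rw [ent_rec r m a p i j hm i.isLt j.isLt]
    congr 1
    · split_ifs with h
      · rw [ih]
      · rfl
    · rw [ih]

end BE

/-- **Equation (6.5) of Bloch–Esnault.**
For every `p ≥ 1`, the naive block trace satisfies
`Tr(M^p) = Σ_{q=1}^{p} (−1)^q Σ a_{m₁} ⋯ a_{m_q}`, the inner sum running over
`1 ≤ i ≤ m` and tuples `(m₁, …, m_q)` with `1 ≤ m_k ≤ m`, `Σ m_k = p`, and
`m₁ ≥ m − i + 1` (so each tuple is counted once for each `i` with `m − m₁ + 1 ≤ i ≤ m`).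
Here `i` is 1-based, `i = i0 + 1` for `i0 : Fin m`, and `m_k = t k + 1` for
`t k : Fin m`; the constraints read `Σ (t k + 1) = p` and `m ≤ t 0 + i0 + 1`. -/
theorem statement4 {K : Type*} [Field K] [CharZero K] (r m : ℕ) (hr : 1 ≤ r) (hm : 1 ≤ m)
    (a : ℕ → Matrix (Fin r) (Fin r) K) (p : ℕ) (hp : 1 ≤ p) :
    ∑ i : Fin m, (blockCompanion r m a ^ p) i i =
      ∑ q ∈ Finset.Icc 1 p, ∑ i : Fin m, ∑ t : Fin q → Fin m,
        if (∑ k : Fin q, ((t k : ℕ) + 1)) = p ∧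
            (∀ k : Fin q, (k : ℕ) = 0 → m ≤ (t k : ℕ) + (i : ℕ) + 1) then
          (-1 : K) ^ q • (List.ofFn fun k : Fin q => a ((t k : ℕ) + 1)).prod
        else 0 := by
  rw [Finset.sum_congr rfl fun i _ => pow_ent r m a hm p i i]
  have h2 : ∀ i : Fin m, Ent r m a p (i : ℕ) (i : ℕ)
      = ∑ q ∈ Finset.Icc 1 p, EntS r m a p (i : ℕ) (i : ℕ) q := by
    intro i
    rw [Ent, if_neg (by omega), zero_add]
  rw [Finset.sum_congr rfl fun i _ => h2 i, Finset.sum_comm]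
  refine Finset.sum_congr rfl fun q _ => Finset.sum_congr rfl fun i _ => ?_
  rw [EntS]
  exact Finset.sum_congr rfl fun t _ => if_congr (and_congr (by omega) Iff.rfl) rfl rfl
end

section
/- Let K be a field of characteristic zero, r ≥ 1, m ≥ 1, and a_1, …, a_m ∈ M_r(K); set a_j := 0 for j > m. Let M be the block companion matrix of g(u) = u^m + a_1 u^{m-1} + ⋯ + a_m and let c_p := Tr(M^p) ∈ M_r(K) be the naive block trace. Then for every integer p ≥ 1 one has the Newton-type identity c_p + c_{p-1} a_1 + c_{p-2} a_2 + ⋯ + c_1 a_{p-1} = −p·a_p in M_r(K); in particular the left-hand side equals −p·a_p for 1 ≤ p ≤ m and equals 0 for p > m. -/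
section Aux
variable {K : Type*} [Field K] {r m : ℕ} (a : ℕ → Matrix (Fin r) (Fin r) K)

lemma bc_apply_last (i j : Fin m) (hj : (j:ℕ) + 1 = m) :
    blockCompanion r m a i j = -a (m - (i:ℕ)) := by
  simp [blockCompanion, hj]

lemma bc_apply_ne (i j : Fin m) (hj : (j:ℕ) + 1 ≠ m) :
    blockCompanion r m a i j = if (i:ℕ) = (j:ℕ) + 1 then 1 else 0 := by
  simp [blockCompanion, hj]

lemma entryE (hm : 0 < m) : ∀ (n : ℕ) (i c : Fin m),
    (blockCompanion r m a ^ n) i c =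
      if m - 1 - (c:ℕ) ≤ n then
        (blockCompanion r m a ^ (n - (m - 1 - (c:ℕ)))) i ⟨m-1, by omega⟩
      else if (i:ℕ) = (c:ℕ) + n then 1 else 0 := by
  intro n
  induction n with
  | zero =>
    intro i c
    by_cases hc : (c:ℕ) = m - 1
    · rw [if_pos (by omega : m - 1 - (c:ℕ) ≤ 0)]
      have hceq : c = ⟨m-1, by omega⟩ := Fin.ext (show (c:ℕ) = m-1 from hc)
      rw [hceq]
      simp
    · have h1 : ¬ (m - 1 - (c:ℕ) ≤ 0) := by have := c.isLt; omega
      rw [if_neg h1, pow_zero, Matrix.one_apply]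
      simp [Fin.ext_iff]
  | succ n ih =>
    intro i c
    by_cases hc : (c:ℕ) + 1 = m
    · have hceq : c = ⟨m-1, by omega⟩ := Fin.ext (show (c:ℕ) = m-1 by omega)
      rw [hceq]
      simp
    · have hlt : (c:ℕ) + 1 < m := by have := c.isLt; omega
      have step : (blockCompanion r m a ^ (n+1)) i c
          = (blockCompanion r m a ^ n) i ⟨(c:ℕ)+1, hlt⟩ := by
        rw [pow_succ, Matrix.mul_apply]
        have : ∀ k : Fin m, (blockCompanion r m a ^ n) i k * blockCompanion r m a k c
            = if k = (⟨(c:ℕ)+1, hlt⟩ : Fin m) then (blockCompanion r m a ^ n) i ⟨(c:ℕ)+1, hlt⟩ else 0 := by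
          intro k
          rw [bc_apply_ne a k c hc]
          by_cases hk : k = (⟨(c:ℕ)+1, hlt⟩ : Fin m)
          · subst hk; simp
          · have : ¬ ((k:ℕ) = (c:ℕ) + 1) := by
              simpa [Fin.ext_iff] using hk
            simp [this, hk]
        rw [Finset.sum_congr rfl (fun k _ => this k)]
        simp
      rw [step, ih i ⟨(c:ℕ)+1, hlt⟩]
      simp only [Fin.val_mk]
      by_cases h : m - 1 - (c:ℕ) ≤ n + 1
      · rw [if_pos (show m - 1 - ((c:ℕ)+1) ≤ n by omega), if_pos h,
          show n - (m - 1 - ((c:ℕ)+1)) = n + 1 - (m - 1 - (c:ℕ)) by omega]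
      · rw [if_neg (show ¬ (m - 1 - ((c:ℕ)+1) ≤ n) by omega), if_neg h]
        have : ((i:ℕ) = (c:ℕ) + 1 + n) ↔ ((i:ℕ) = (c:ℕ) + (n+1)) := by omega
        simp [this]

end Aux

section Aux2
variable {K : Type*} [Field K] {r m : ℕ} (a : ℕ → Matrix (Fin r) (Fin r) K)

lemma tRec (hm : 0 < m) (n : ℕ) (i : Fin m) :
    (blockCompanion r m a ^ (n+1)) i ⟨m-1, by omega⟩
      = ∑ k : Fin m, (blockCompanion r m a ^ n) i k * (-a (m - (k:ℕ))) := by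
  rw [pow_succ, Matrix.mul_apply]
  refine Finset.sum_congr rfl fun k _ => ?_
  rw [bc_apply_last a k ⟨m-1, by omega⟩ (by simp [Fin.val_mk]; omega)]

lemma P1 (hm : 0 < m) (ha : ∀ j, m < j → a j = 0) (n : ℕ) (i : Fin m) :
    ∑ k : Fin m, (if m - 1 - (k:ℕ) ≤ n then
        (blockCompanion r m a ^ (n - (m - 1 - (k:ℕ)))) i ⟨m-1, by omega⟩ * a (m - (k:ℕ)) else 0)
    = ∑ q ∈ Finset.range (n+1), (blockCompanion r m a ^ q) i ⟨m-1, by omega⟩ * a (n+1-q) := by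
  rw [Fin.sum_univ_eq_sum_range (fun k => if m - 1 - k ≤ n then
        (blockCompanion r m a ^ (n - (m - 1 - k))) i ⟨m-1, by omega⟩ * a (m - k) else 0) m]
  rw [← Finset.sum_filter]
  rw [← Finset.sum_filter_of_ne (p := fun q => n + 1 - q ≤ m)
      (f := fun q => (blockCompanion r m a ^ q) i ⟨m-1, by omega⟩ * a (n+1-q))
      (by
        intro q hq hne
        by_contra hc
        simp only [Finset.mem_range] at hq
        exact hne (by simp [ha (n+1-q) (by omega)]))]
  refine Finset.sum_nbij' (fun k => n - (m - 1 - k)) (fun q => m - 1 - (n - q)) ?_ ?_ ?_ ?_ ?_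
  · intro k hk
    simp only [Finset.mem_filter, Finset.mem_range] at hk ⊢
    omega
  · intro q hq
    simp only [Finset.mem_filter, Finset.mem_range] at hq ⊢
    omega
  · intro k hk
    simp only [Finset.mem_filter, Finset.mem_range] at hk
    beta_reduce
    omega
  · intro q hq
    simp only [Finset.mem_filter, Finset.mem_range] at hq
    beta_reduce
    omega
  · intro k hk
    simp only [Finset.mem_filter, Finset.mem_range] at hk
    beta_reduce
    rw [show n + 1 - (n - (m - 1 - k)) = m - k by omega]

end Aux2

section Aux3
variable {K : Type*} [Field K] {r m : ℕ} (a : ℕ → Matrix (Fin r) (Fin r) K)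

lemma P2 (hm : 0 < m) (n : ℕ) (i : Fin m) :
    ∑ k : Fin m, (if m - 1 - (k:ℕ) ≤ n then 0 else
        (if (i:ℕ) = (k:ℕ) + n then (1 : Matrix (Fin r) (Fin r) K) else 0) * (-a (m - (k:ℕ))))
    = -(if (i:ℕ) + 2 ≤ m ∧ n + 1 ≤ (i:ℕ) + 1 then a (m - 1 - (i:ℕ) + (n+1)) else 0) := by
  by_cases hn : n ≤ (i:ℕ)
  · have hk0 : (i:ℕ) - n < m := by have := i.isLt; omega
    rw [Finset.sum_eq_single (⟨(i:ℕ)-n, hk0⟩ : Fin m)]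
    · simp only [Fin.val_mk]
      by_cases him : (i:ℕ) + 2 ≤ m
      · rw [if_neg (by omega), if_pos (by omega), one_mul, if_pos ⟨him, by omega⟩,
          show m - ((i:ℕ)-n) = m - 1 - (i:ℕ) + (n+1) by omega]
      · rw [if_pos (by have := i.isLt; omega), if_neg (by omega), neg_zero]
    · intro b _ hb
      have hbv : ¬ ((i:ℕ) = (b:ℕ) + n) := by
        intro h
        exact hb (Fin.ext (by simp only [Fin.val_mk]; omega))
      by_cases hc : m - 1 - (b:ℕ) ≤ n
      · rw [if_pos hc]
      · rw [if_neg hc, if_neg hbv, zero_mul]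
    · intro h; exact absurd (Finset.mem_univ _) h
  · rw [Finset.sum_eq_zero, if_neg (by omega), neg_zero]
    intro k _
    by_cases hc : m - 1 - (k:ℕ) ≤ n
    · rw [if_pos hc]
    · rw [if_neg hc, if_neg (by omega), zero_mul]

lemma Ulem (hm : 0 < m) (ha : ∀ j, m < j → a j = 0) (n : ℕ) (i : Fin m) :
    (blockCompanion r m a ^ (n+1)) i ⟨m-1, by omega⟩
      + ∑ q ∈ Finset.range (n+1), (blockCompanion r m a ^ q) i ⟨m-1, by omega⟩ * a (n+1-q)
    = -(if (i:ℕ) + 2 ≤ m ∧ n + 1 ≤ (i:ℕ) + 1 then a (m - 1 - (i:ℕ) + (n+1)) else 0) := by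
  rw [tRec a hm n i]
  have hsplit : ∀ k : Fin m, (blockCompanion r m a ^ n) i k * (-a (m - (k:ℕ)))
      = (if m - 1 - (k:ℕ) ≤ n then
            -((blockCompanion r m a ^ (n - (m - 1 - (k:ℕ)))) i ⟨m-1, by omega⟩ * a (m - (k:ℕ)))
          else 0)
        + (if m - 1 - (k:ℕ) ≤ n then 0 else
            (if (i:ℕ) = (k:ℕ) + n then (1 : Matrix (Fin r) (Fin r) K) else 0) * (-a (m - (k:ℕ)))) := by
    intro k
    rw [entryE a hm n i k]
    by_cases hc : m - 1 - (k:ℕ) ≤ n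
    · simp [hc, mul_neg]
    · simp [hc]
  rw [Finset.sum_congr rfl fun k _ => hsplit k, Finset.sum_add_distrib]
  have h1 : (∑ k : Fin m, (if m - 1 - (k:ℕ) ≤ n then
        -((blockCompanion r m a ^ (n - (m - 1 - (k:ℕ)))) i ⟨m-1, by omega⟩ * a (m - (k:ℕ)))
      else 0))
      = -(∑ k : Fin m, (if m - 1 - (k:ℕ) ≤ n then
        (blockCompanion r m a ^ (n - (m - 1 - (k:ℕ)))) i ⟨m-1, by omega⟩ * a (m - (k:ℕ)) else 0)) := by
    rw [← Finset.sum_neg_distrib]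
    exact Finset.sum_congr rfl fun k _ => by by_cases hc : m - 1 - (k:ℕ) ≤ n <;> simp [hc]
  rw [h1, P1 a hm ha n i, P2 a hm n i]
  abel

end Aux3

section Aux4
variable {K : Type*} [Field K] {r m : ℕ} (a : ℕ → Matrix (Fin r) (Fin r) K)

lemma Conv (hm : 0 < m) (ha : ∀ j, m < j → a j = 0) (n : ℕ) (i : Fin m) :
    ∑ k ∈ Finset.range (n+2),
        (blockCompanion r m a ^ (n+1-k)) i ⟨m-1, by omega⟩ * (if k = 0 then 1 else a k)
    = -(if (i:ℕ) + 2 ≤ m ∧ n + 1 ≤ (i:ℕ) + 1 then a (m - 1 - (i:ℕ) + (n+1)) else 0) := by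
  rw [Finset.sum_range_succ']
  simp only [Nat.succ_ne_zero, Nat.sub_zero, ite_true, ite_false, if_true, if_false, mul_one]
  have hre : (∑ k ∈ Finset.range (n+1),
        (blockCompanion r m a ^ (n+1-(k+1))) i ⟨m-1, by omega⟩ * a (k+1))
      = ∑ q ∈ Finset.range (n+1),
        (blockCompanion r m a ^ q) i ⟨m-1, by omega⟩ * a (n+1-q) := by
    rw [← Finset.sum_range_reflect
      (fun q => (blockCompanion r m a ^ q) i ⟨m-1, by omega⟩ * a (n+1-q)) (n+1)]
    refine Finset.sum_congr rfl fun j hj => ?_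
    simp only [Finset.mem_range] at hj
    rw [show n + 1 - (j+1) = n + 1 - 1 - j by omega, show n + 1 - (n + 1 - 1 - j) = j + 1 by omega]
  rw [hre, add_comm]
  exact Ulem a hm ha n i

end Aux4


/-- **Newton-type identity for block traces of companion powers.**
With `a j := 0` for `j > m` and `c_p := Tr(M^p)` the naive block trace, for every `p ≥ 1`
one has `c_p + c_{p-1} a_1 + ⋯ + c_1 a_{p-1} = −p·a_p` in `M_r(K)`; in particular the
left-hand side equals `−p·a_p` for `1 ≤ p ≤ m` and `0` for `p > m`.  (The sum below is
over `k = 0, …, p-1`, with the `k = 0` factor interpreted as the identity matrix.) -/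
theorem statement5 {K : Type*} [Field K] [CharZero K] (r m : ℕ) (hr : 1 ≤ r) (hm : 1 ≤ m)
    (a : ℕ → Matrix (Fin r) (Fin r) K) (ha : ∀ j : ℕ, m < j → a j = 0)
    (p : ℕ) (hp : 1 ≤ p) :
    ∑ k ∈ Finset.range p,
        (∑ i : Fin m, (blockCompanion r m a ^ (p - k)) i i) * (if k = 0 then 1 else a k) =
      -(p • a p) := by
  have hm0 : 0 < m := hm
  have step1 : ∀ k ∈ Finset.range p,
      (∑ i : Fin m, (blockCompanion r m a ^ (p - k)) i i) * (if k = 0 then 1 else a k)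
      = ∑ i : Fin m, (if m - 1 - (i:ℕ) ≤ p - k then
          (blockCompanion r m a ^ (p - k - (m - 1 - (i:ℕ)))) i ⟨m-1, by omega⟩ else 0)
          * (if k = 0 then 1 else a k) := by
    intro k hk
    simp only [Finset.mem_range] at hk
    have htr : (∑ i : Fin m, (blockCompanion r m a ^ (p - k)) i i)
        = ∑ i : Fin m, (if m - 1 - (i:ℕ) ≤ p - k then
            (blockCompanion r m a ^ (p - k - (m - 1 - (i:ℕ)))) i ⟨m-1, by omega⟩ else 0) := by
      refine Finset.sum_congr rfl fun i _ => ?_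
      rw [entryE a hm0 (p-k) i i]
      by_cases hc : m - 1 - (i:ℕ) ≤ p - k
      · rw [if_pos hc, if_pos hc]
      · rw [if_neg hc, if_neg hc, if_neg (show ¬ ((i:ℕ) = (i:ℕ) + (p-k)) by omega)]
    rw [htr, Finset.sum_mul]
  rw [Finset.sum_congr rfl step1, Finset.sum_comm]
  have key : ∀ i : Fin m,
      (∑ k ∈ Finset.range p, (if m - 1 - (i:ℕ) ≤ p - k then
          (blockCompanion r m a ^ (p - k - (m - 1 - (i:ℕ)))) i ⟨m-1, by omega⟩ else 0)
          * (if k = 0 then 1 else a k))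
      = -(if (i:ℕ) + 1 = m then a p else 0)
        + -(if (i:ℕ) + 2 ≤ m ∧ m ≤ (i:ℕ) + p ∧ p ≤ m then a p else 0) := by
    intro i
    have hilt := i.isLt
    by_cases hdA : p < m - 1 - (i:ℕ)
    · -- case A : d > p, everything vanishes
      rw [Finset.sum_eq_zero (fun k hk => by
          simp only [Finset.mem_range] at hk
          rw [if_neg (by omega), zero_mul]),
        if_neg (by omega), if_neg (by omega), neg_zero, add_zero]
    · by_cases hdB : p = m - 1 - (i:ℕ)
      · -- case B : d = p, only k = 0 contributes and that term is 0
        have hne : ¬ i = (⟨m-1, by omega⟩ : Fin m) := by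
          intro h
          have := congrArg Fin.val h
          simp only [Fin.val_mk] at this
          omega
        rw [Finset.sum_eq_single_of_mem 0 (Finset.mem_range.mpr (by omega))
            (fun k hk hk0 => by
              simp only [Finset.mem_range] at hk
              rw [if_neg (by omega), zero_mul]),
          if_pos (by omega), show p - 0 - (m - 1 - (i:ℕ)) = 0 by omega, pow_zero,
          Matrix.one_apply, if_neg hne, zero_mul, if_neg (by omega), if_neg (by omega)]
        simp
      · -- case C : d < p
        have hdC : m - 1 - (i:ℕ) < p := by omega
        by_cases hd0 : (i:ℕ) + 1 = m
        · -- d = 0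
          have hd0' : m - 1 - (i:ℕ) = 0 := by omega
          have hsum : (∑ k ∈ Finset.range p, (if m - 1 - (i:ℕ) ≤ p - k then
              (blockCompanion r m a ^ (p - k - (m - 1 - (i:ℕ)))) i ⟨m-1, by omega⟩ else 0)
              * (if k = 0 then 1 else a k))
              = ∑ k ∈ Finset.range p,
                (blockCompanion r m a ^ (p - 1 + 1 - k)) i ⟨m-1, by omega⟩
                  * (if k = 0 then 1 else a k) := by
            refine Finset.sum_congr rfl fun k hk => ?_
            rw [if_pos (by omega), hd0', Nat.sub_zero, show p - 1 + 1 - k = p - k by omega]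
          rw [hsum]
          have hconv := Conv a hm0 ha (p-1) i
          rw [show p - 1 + 2 = p + 1 by omega, Finset.sum_range_succ] at hconv
          have hlast : (blockCompanion r m a ^ (p - 1 + 1 - p)) i ⟨m-1, by omega⟩
              * (if p = 0 then 1 else a p) = a p := by
            rw [show p - 1 + 1 - p = 0 by omega, pow_zero, Matrix.one_apply,
              if_pos (Fin.ext (show (i:ℕ) = m - 1 by omega)), if_neg (by omega), one_mul]
          rw [hlast, if_neg (by omega), neg_zero] at hconv
          rw [if_pos hd0, if_neg (by omega), neg_zero, add_zero]
          exact eq_neg_of_add_eq_zero_left hconv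
        · -- d ≥ 1
          have hd1 : 1 ≤ m - 1 - (i:ℕ) := by omega
          have hN : m - 1 - (i:ℕ) + 1 ≤ p := by omega
          have hsum : (∑ k ∈ Finset.range p, (if m - 1 - (i:ℕ) ≤ p - k then
              (blockCompanion r m a ^ (p - k - (m - 1 - (i:ℕ)))) i ⟨m-1, by omega⟩ else 0)
              * (if k = 0 then 1 else a k))
              = ∑ k ∈ Finset.range (p - (m - 1 - (i:ℕ)) - 1 + 2),
                (blockCompanion r m a ^ (p - (m - 1 - (i:ℕ)) - 1 + 1 - k)) i ⟨m-1, by omega⟩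
                  * (if k = 0 then 1 else a k) := by
            rw [show (Finset.range (p - (m - 1 - (i:ℕ)) - 1 + 2))
                = (Finset.range p).filter (fun k => m - 1 - (i:ℕ) ≤ p - k) from
              Finset.ext fun x => by
                simp only [Finset.mem_filter, Finset.mem_range]
                omega]
            rw [Finset.sum_filter]
            refine Finset.sum_congr rfl fun k hk => ?_
            simp only [Finset.mem_range] at hk
            by_cases hc : m - 1 - (i:ℕ) ≤ p - k
            · rw [if_pos hc, if_pos hc,
                show p - (m - 1 - (i:ℕ)) - 1 + 1 - k = p - k - (m - 1 - (i:ℕ)) by omega]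
            · rw [if_neg hc, if_neg hc, zero_mul]
          rw [hsum, Conv a hm0 ha (p - (m - 1 - (i:ℕ)) - 1) i,
            show m - 1 - (i:ℕ) + (p - (m - 1 - (i:ℕ)) - 1 + 1) = p by omega,
            if_neg (show ¬ ((i:ℕ) + 1 = m) from hd0), neg_zero, zero_add]
          by_cases hq : (i:ℕ) + 2 ≤ m ∧ p - (m - 1 - (i:ℕ)) - 1 + 1 ≤ (i:ℕ) + 1
          · rw [if_pos hq, if_pos (by omega)]
          · rw [if_neg hq, if_neg (by omega)]
  rw [Finset.sum_congr rfl fun i _ => key i, Finset.sum_add_distrib]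
  have hS1 : (∑ i : Fin m, -(if (i:ℕ) + 1 = m then a p else 0)) = -(a p) := by
    rw [Finset.sum_neg_distrib,
      Finset.sum_eq_single_of_mem (⟨m-1, by omega⟩ : Fin m) (Finset.mem_univ _)
        (fun b _ hb => by
          refine if_neg fun h => hb (Fin.ext ?_)
          simp only [Fin.val_mk]
          omega),
      if_pos (by simp only [Fin.val_mk]; omega)]
  rw [hS1]
  have hS2 : (∑ i : Fin m, -(if (i:ℕ) + 2 ≤ m ∧ m ≤ (i:ℕ) + p ∧ p ≤ m then a p else 0))
      = -((p - 1) • a p) := by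
    rw [Finset.sum_neg_distrib]
    congr 1
    rw [Fin.sum_univ_eq_sum_range (fun i => if i + 2 ≤ m ∧ m ≤ i + p ∧ p ≤ m then a p else 0) m,
      ← Finset.sum_filter]
    by_cases hpm : p ≤ m
    · rw [show (Finset.range m).filter (fun i => i + 2 ≤ m ∧ m ≤ i + p ∧ p ≤ m)
          = Finset.Ico (m - p) (m - 1) from
        Finset.ext fun x => by
          simp only [Finset.mem_filter, Finset.mem_range, Finset.mem_Ico]
          omega]
      rw [Finset.sum_const, Nat.card_Ico, show m - 1 - (m - p) = p - 1 by omega]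
    · rw [show (Finset.range m).filter (fun i => i + 2 ≤ m ∧ m ≤ i + p ∧ p ≤ m)
          = (∅ : Finset ℕ) from
        Finset.ext fun x => by
          simp only [Finset.mem_filter, Finset.mem_range, Finset.notMem_empty, iff_false]
          omega]
      rw [Finset.sum_empty, ha p (by omega), smul_zero]
  rw [hS2]
  obtain ⟨q, rfl⟩ : ∃ q, p = q + 1 := ⟨p - 1, by omega⟩
  rw [show q + 1 - 1 = q from rfl, succ_nsmul' (a (q+1)) q, neg_add]
end

section
/- Let K be a field of characteristic zero, r ≥ 1, m ≥ 1, and a_1, …, a_m ∈ M_r(K), with a_0 := 1 (the identity of M_r(K)). Let M be the block companion matrix of g(u) = u^m + a_1 u^{m-1} + ⋯ + a_m. Then for every m×m matrix X with entries in M_r(K), writing t_k := Tr(X M^k) ∈ M_r(K) for the naive block trace, one has t_0 a_m + t_1 a_{m-1} + ⋯ + t_{m-1} a_1 + t_m = 0, i.e. Σ_{k=0}^{m} Tr(X M^{m-k})·a_k = 0 in M_r(K). -/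
section Aux
variable {K : Type*} [Field K] (r m : ℕ) (a : ℕ → Matrix (Fin r) (Fin r) K)

/-- For `n < m`, the first block column of `M^n` is the `n`-th block basis vector. -/
lemma bc_pow_col (hm : 0 < m) (n : ℕ) (hn : n < m) (p : Fin m) :
    (blockCompanion r m a ^ n) p ⟨0, hm⟩ = if (p : ℕ) = n then 1 else 0 := by
  induction n generalizing p with
  | zero =>
    simp [Matrix.one_apply, Fin.ext_iff, eq_comm]
  | succ n ih =>
    have hn' : n < m := Nat.lt_of_succ_lt hn
    rw [pow_succ', Matrix.mul_apply]
    have key : ∀ j : Fin m, ((j : ℕ) = n) = (j = ⟨n, hn'⟩) := fun j => by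
      simp [Fin.ext_iff]
    simp only [ih hn', key, mul_ite, mul_one, mul_zero]
    rw [Finset.sum_ite_eq' Finset.univ (⟨n, hn'⟩ : Fin m)
      (fun j => blockCompanion r m a p j)]
    simp only [Finset.mem_univ, if_true]
    have : (n : ℕ) + 1 ≠ m := Nat.ne_of_lt hn
    simp [blockCompanion, this]

/-- Column `q` of `M^t` equals the first column of `M^(t+q)`. -/
lemma bc_pow_shift (hm : 0 < m) (t : ℕ) (p q : Fin m) :
    (blockCompanion r m a ^ (t + (q : ℕ))) p ⟨0, hm⟩ =
      (blockCompanion r m a ^ t) p q := by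
  rw [pow_add, Matrix.mul_apply]
  have key : ∀ j : Fin m,
      (blockCompanion r m a ^ (q : ℕ)) j ⟨0, hm⟩ = if j = q then 1 else 0 := by
    intro j
    rw [bc_pow_col r m a hm _ q.isLt]
    simp [Fin.ext_iff]
  simp only [key, mul_ite, mul_one, mul_zero]
  simp

/-- The linear recurrence satisfied by the first column of powers of `M`:
for `n = m + d ≥ m`, `Σ_k (M^(n-k))_{p,0} · a k = 0`. -/
lemma bc_rec (hm : 0 < m) (ha0 : a 0 = 1) (d : ℕ) (p : Fin m) :
    ∑ k ∈ Finset.range (m + 1),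
        (blockCompanion r m a ^ (m + d - k)) p ⟨0, hm⟩ * a k = 0 := by
  induction d generalizing p with
  | zero =>
    rw [Finset.sum_range_succ']
    simp only [Nat.add_zero, Nat.sub_zero, ha0, mul_one]
    have hMm : (blockCompanion r m a ^ m) p ⟨0, hm⟩ = -a (m - (p : ℕ)) := by
      obtain ⟨m', rfl⟩ : ∃ m', m = m' + 1 := ⟨m - 1, by omega⟩
      rw [pow_succ', Matrix.mul_apply]
      have hm1 : m' < m' + 1 := Nat.lt_succ_self m'
      have key : ∀ j : Fin (m' + 1),
          (blockCompanion r (m' + 1) a ^ m') j ⟨0, hm⟩ = if j = ⟨m', hm1⟩ then 1 else 0 := by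
        intro j
        rw [bc_pow_col r (m' + 1) a hm _ hm1]
        simp [Fin.ext_iff]
      simp only [key, mul_ite, mul_one, mul_zero]
      rw [Finset.sum_ite_eq' Finset.univ (⟨m', hm1⟩ : Fin (m' + 1))
        (fun j => blockCompanion r (m' + 1) a p j)]
      simp [blockCompanion]
    rw [hMm]
    have hterm : ∀ k ∈ Finset.range m,
        (blockCompanion r m a ^ (m - (k + 1))) p ⟨0, hm⟩ * a (k + 1)
          = if (p : ℕ) = m - (k + 1) then a (k + 1) else 0 := by
      intro k hk
      rw [Finset.mem_range] at hk
      rw [bc_pow_col r m a hm _ (by omega)]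
      split <;> simp
    rw [Finset.sum_congr rfl hterm]
    have hp : (p : ℕ) < m := p.isLt
    rw [Finset.sum_eq_single (m - (p : ℕ) - 1)]
    · rw [if_pos (by omega)]
      have h2 : m - (p : ℕ) - 1 + 1 = m - (p : ℕ) := by omega
      rw [h2, add_neg_cancel]
    · intro b hb hbne
      rw [Finset.mem_range] at hb
      rw [if_neg (by omega)]
    · intro hmem
      exact absurd (Finset.mem_range.mpr (by omega)) hmem
  | succ d ih =>
    have hterm : ∀ k ∈ Finset.range (m + 1),
        (blockCompanion r m a ^ (m + (d + 1) - k)) p ⟨0, hm⟩ * a k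
          = ∑ j : Fin m, blockCompanion r m a p j *
              ((blockCompanion r m a ^ (m + d - k)) j ⟨0, hm⟩ * a k) := by
      intro k hk
      rw [Finset.mem_range] at hk
      have h1 : m + (d + 1) - k = (m + d - k) + 1 := by omega
      rw [h1, pow_succ', Matrix.mul_apply, Finset.sum_mul]
      simp [mul_assoc]
    rw [Finset.sum_congr rfl hterm, Finset.sum_comm]
    simp only [← Finset.mul_sum]
    simp [ih]

end Aux

/-- **The Cayley–Hamilton type relation for block traces (top degree).**
With `a 0 := 1` (the identity of `M_r(K)`) and `t_k := Tr(Xm·M^k)` the naive block trace,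
one has `t_0 a_m + t_1 a_{m-1} + ⋯ + t_{m-1} a_1 + t_m = 0`, i.e.
`Σ_{k=0}^{m} Tr(Xm·M^{m-k})·a_k = 0` in `M_r(K)`. -/
theorem statement6 {K : Type*} [Field K] [CharZero K] (r m : ℕ) (hr : 1 ≤ r) (hm : 1 ≤ m)
    (a : ℕ → Matrix (Fin r) (Fin r) K) (ha0 : a 0 = 1)
    (Xm : Matrix (Fin m) (Fin m) (Matrix (Fin r) (Fin r) K)) :
    ∑ k ∈ Finset.range (m + 1),
        (∑ i : Fin m, (Xm * blockCompanion r m a ^ (m - k)) i i) * a k = 0 := by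
  have hm0 : 0 < m := hm
  have key : ∀ (i j : Fin m),
      ∑ k ∈ Finset.range (m + 1), (blockCompanion r m a ^ (m - k)) j i * a k = 0 := by
    intro i j
    have := bc_rec r m a hm0 ha0 (i : ℕ) j
    rw [← this]
    refine Finset.sum_congr rfl fun k hk => ?_
    rw [Finset.mem_range] at hk
    have h1 : m + (i : ℕ) - k = (m - k) + (i : ℕ) := by omega
    rw [h1, bc_pow_shift r m a hm0]
  calc ∑ k ∈ Finset.range (m + 1),
        (∑ i : Fin m, (Xm * blockCompanion r m a ^ (m - k)) i i) * a k
      = ∑ i : Fin m, ∑ j : Fin m, Xm i j *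
          (∑ k ∈ Finset.range (m + 1), (blockCompanion r m a ^ (m - k)) j i * a k) := by
        simp only [Matrix.mul_apply, Finset.sum_mul, Finset.mul_sum, mul_assoc]
        rw [Finset.sum_comm]
        refine Finset.sum_congr rfl fun i _ => Finset.sum_comm
    _ = 0 := by simp [key]
end

section
/- Let K be a field of characteristic zero, r ≥ 1, m ≥ 1. Let g_1, …, g_m ∈ M_r(K) with g_m invertible, and let η_0, η_1, …, η_{m-1} ∈ M_r(K). Assume that for each ℓ = 1, …, m−1 one has [g_m, η_ℓ] + [g_{m-1}, η_{ℓ+1}] + ⋯ + [g_{ℓ+1}, η_{m-1}] = 0 (i.e. Σ_{s=ℓ}^{m-1} [g_{m+ℓ-s}, η_s] = 0). Then Tr( g_m^{-1} · Σ_{s=0}^{m-1} [g_{m-s}, η_s] ) = 0, where Tr denotes the usual trace on M_r(K) and [x,y] = xy − yx. -/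
/-!
Put `G(z) = ∑ₜ zᵗ g_{m-t}` and `N(z) = ∑ₜ zᵗ η_{m-1-t}`, matrices of formal power series.
The verticality relations say exactly that the commutator `[G, N]` vanishes to order `m - 1`,
and its coefficient of `z^{m-1}` is `∑ₛ [g_{m-s}, η_s]`. As `G(0) = g_m` is invertible, so is `G`,
and `Tr (G⁻¹ [G, N]) = 0` by cyclicity of the trace; the coefficient of `z^{m-1}` of this
identity is `Tr (g_m⁻¹ ∑ₛ [g_{m-s}, η_s]) = 0`.
-/

open PowerSeries Finset

theorem Finset.Nat.sum_antidiagonal_eq_sum_Icc {M : Type*} [AddCommMonoid M]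
    (f : ℕ → ℕ → M) {ℓ k n : ℕ} (h : ℓ + k = n) :
    ∑ p ∈ antidiagonal k, f p.1 (n - p.2) = ∑ s ∈ Icc ℓ n, f (s - ℓ) s := by
  refine sum_nbij' (fun p => n - p.2) (fun s => (s - ℓ, n - s)) ?_ ?_ ?_ ?_ ?_ <;>
    simp only [HasAntidiagonal.mem_antidiagonal, mem_Icc, Prod.forall, Prod.mk.injEq] <;>
    intros <;> first | omega | (congr 1; omega)

namespace Matrix

variable {n R : Type*} [Fintype n] [CommRing R]

def ofCoeffs (a : ℕ → Matrix n n R) : Matrix n n R⟦X⟧ :=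
  of fun i j => PowerSeries.mk fun t => a t i j

omit [Fintype n] in
@[simp]
theorem map_coeff_ofCoeffs (a : ℕ → Matrix n n R) (k : ℕ) :
    (ofCoeffs a).map (coeff k) = a k := by
  ext i j
  simp [ofCoeffs]

theorem map_coeff_mul (A B : Matrix n n R⟦X⟧) (k : ℕ) :
    (A * B).map (coeff k) = ∑ p ∈ antidiagonal k, A.map (coeff p.1) * B.map (coeff p.2) := by
  ext i j
  simp only [map_apply, mul_apply, map_sum, coeff_mul, sum_apply]
  exact sum_comm

theorem map_coeff_ofCoeffs_commutator (a b : ℕ → Matrix n n R) (k : ℕ) :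
    (ofCoeffs a * ofCoeffs b - ofCoeffs b * ofCoeffs a).map (coeff k) =
      ∑ p ∈ antidiagonal k, (a p.1 * b p.2 - b p.2 * a p.1) := by
  simp only [Matrix.map_sub _ (map_sub _), map_coeff_mul, map_coeff_ofCoeffs]
  rw [← Nat.sum_antidiagonal_swap (f := fun p => b p.1 * a p.2), ← sum_sub_distrib]
  rfl

theorem map_coeff_mul_of_map_coeff_eq_zero (A B : Matrix n n R⟦X⟧) {k : ℕ}
    (hB : ∀ j < k, B.map (coeff j) = 0) :
    (A * B).map (coeff k) = A.map (coeff 0) * B.map (coeff k) := by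
  rw [map_coeff_mul, Nat.sum_antidiagonal_eq_sum_range_succ_mk, sum_range_succ', sum_eq_zero]
  · simp
  · intro j hj
    rw [hB _ (by simp at hj; omega), Matrix.mul_zero]

section Inverse

variable [DecidableEq n]

theorem trace_nonsing_inv_mul_commutator {A : Matrix n n R} (hA : IsUnit A.det)
    (N : Matrix n n R) : trace (A⁻¹ * (A * N - N * A)) = 0 := by
  rw [mul_sub, trace_sub, ← Matrix.mul_assoc, nonsing_inv_mul A hA, Matrix.one_mul,
    ← Matrix.mul_assoc, trace_mul_comm, ← Matrix.mul_assoc, mul_nonsing_inv A hA,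
    Matrix.one_mul, sub_self]

theorem map_nonsing_inv {S : Type*} [CommRing S] (f : R →+* S) {A : Matrix n n R}
    (hA : IsUnit A.det) : A⁻¹.map f = (A.map f)⁻¹ :=
  (inv_eq_left_inv <| by rw [← Matrix.map_mul, nonsing_inv_mul A hA]; simp).symm

theorem isUnit_det_iff_isUnit_det_map_constantCoeff {A : Matrix n n R⟦X⟧} :
    IsUnit A.det ↔ IsUnit (A.map constantCoeff).det := by
  rw [isUnit_iff_constantCoeff, RingHom.map_det]
  rfl

end Inverse

end Matrix

open Matrix

theorem statement7_general {K : Type*} [Field K] (r m : ℕ) (hm : 1 ≤ m)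
    (g η : ℕ → Matrix (Fin r) (Fin r) K)
    (hg : IsUnit (g m))
    (hvert : ∀ ℓ : ℕ, 1 ≤ ℓ → ℓ ≤ m - 1 →
      ∑ s ∈ Finset.Icc ℓ (m - 1), (g (m + ℓ - s) * η s - η s * g (m + ℓ - s)) = 0) :
    Matrix.trace ((g m)⁻¹ * ∑ s ∈ Finset.range m, (g (m - s) * η s - η s * g (m - s))) = 0 := by
  obtain ⟨n, rfl⟩ := Nat.exists_eq_add_of_le' hm
  -- only the coefficients of index `≤ n` matter, so the truncated subtraction is harmless
  set G := ofCoeffs fun t => g (n + 1 - t)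
  set N := ofCoeffs fun t => η (n - t)
  have hG : IsUnit G.det := by
    rw [isUnit_det_iff_isUnit_det_map_constantCoeff, ← coeff_zero_eq_constantCoeff,
      map_coeff_ofCoeffs]
    exact (isUnit_iff_isUnit_det _).mp hg
  have hcoeff : ∀ ℓ k, ℓ + k = n → (G * N - N * G).map (coeff k) =
      ∑ s ∈ Icc ℓ n, (g (n + 1 + ℓ - s) * η s - η s * g (n + 1 + ℓ - s)) := by
    intro ℓ k h
    rw [map_coeff_ofCoeffs_commutator,
      Nat.sum_antidiagonal_eq_sum_Icc (fun a s => g (n + 1 - a) * η s - η s * g (n + 1 - a)) h]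
    refine sum_congr rfl fun s hs => ?_
    rw [mem_Icc] at hs
    rw [show n + 1 - (s - ℓ) = n + 1 + ℓ - s by omega]
  have hlow : ∀ k < n, (G * N - N * G).map (coeff k) = 0 := fun k hk => by
    rw [hcoeff (n - k) k (by omega)]
    simpa using hvert (n - k) (by omega) (by omega)
  calc trace ((g (n + 1))⁻¹ * ∑ s ∈ range (n + 1), (g (n + 1 - s) * η s - η s * g (n + 1 - s)))
      = trace ((G⁻¹ * (G * N - N * G)).map (coeff n)) := by
        rw [map_coeff_mul_of_map_coeff_eq_zero _ _ hlow, hcoeff 0 n (zero_add n),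
          coeff_zero_eq_constantCoeff, map_nonsing_inv _ hG, ← coeff_zero_eq_constantCoeff,
          map_coeff_ofCoeffs, Nat.range_succ_eq_Icc_zero]
        rfl
    _ = coeff n (trace (G⁻¹ * (G * N - N * G))) := (AddMonoidHom.map_trace ..).symm
    _ = 0 := by rw [trace_nonsing_inv_mul_commutator hG, map_zero]

/-- **Vanishing of the local quantity Φ.**
Let `K` be a field of characteristic zero, `r ≥ 1`, `m ≥ 1`. Let
`g 1, …, g m ∈ M_r(K)` with `g m` invertible and `η 0, …, η (m-1) ∈ M_r(K)`.
If for each `ℓ = 1, …, m-1` one has `∑_{s=ℓ}^{m-1} [g (m+ℓ-s), η s] = 0`, then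
`Tr (g m)⁻¹ · ∑_{s=0}^{m-1} [g (m-s), η s]) = 0`. -/
theorem statement7 {K : Type*} [Field K] [CharZero K] (r m : ℕ) (hr : 1 ≤ r) (hm : 1 ≤ m)
    (g η : ℕ → Matrix (Fin r) (Fin r) K)
    (hg : IsUnit (g m))
    (hvert : ∀ ℓ : ℕ, 1 ≤ ℓ → ℓ ≤ m - 1 →
      ∑ s ∈ Finset.Icc ℓ (m - 1), (g (m + ℓ - s) * η s - η s * g (m + ℓ - s)) = 0) :
    Matrix.trace ((g m)⁻¹ * ∑ s ∈ Finset.range m, (g (m - s) * η s - η s * g (m - s))) = 0 :=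
  statement7_general r m hm g η hg hvert
end

section
/- Let K be a field of characteristic zero, n ≥ 1, m ≥ 1. Let a(t) = a_m t^m + ⋯ + a_1 t and b(t) = b_m t^m + ⋯ + b_1 t be polynomials in M_n(K)[t] with zero constant term, and suppose the leading coefficient a_m is invertible. Assume that the commutator [a(t), b(t)] = a(t)b(t) − b(t)a(t) has degree at most m in t, i.e. its coefficients in degrees m+1, …, 2m all vanish, and write c_m for its coefficient of t^m. Then Tr(a_m^{-1} c_m) = 0. -/
/-!
Substituting `t = 1/u`, the reflected series `α(u) = u^m a(1/u)` and `β(u) = u^m b(1/u)` are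
formal power series in `u` with `α(0) = a_m` invertible, so `α` is a unit of `M_n(K)[[u]]`, and
`u^{2m} c(1/u) = αβ - βα` vanishes to order `m` with `u^m`-coefficient `c_m`. Hence
`a_m⁻¹ c_m` is the `u^m`-coefficient of `α⁻¹(αβ - βα) = β - α⁻¹βα`, whose trace vanishes
because the trace of each coefficient of a product of matrix power series is cyclic.
-/

open Polynomial

namespace PowerSeries

theorem coeff_mul_of_coeff_eq_zero_of_lt {R : Type*} [Semiring R] {φ ψ : PowerSeries R} {m : ℕ}
    (hψ : ∀ i < m, coeff i ψ = 0) : coeff m (φ * ψ) = constantCoeff φ * coeff m ψ := by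
  rw [coeff_mul, Finset.sum_eq_single (0, m)]
  · rw [coeff_zero_eq_constantCoeff_apply]
  · rintro ⟨i, j⟩ hij hne
    rw [Finset.HasAntidiagonal.mem_antidiagonal] at hij
    rw [hψ j (by grind), mul_zero]
  · simp

variable {ι R : Type*} [Fintype ι] [DecidableEq ι] [CommRing R]

theorem trace_coeff_mul_comm (φ ψ : PowerSeries (Matrix ι ι R)) (k : ℕ) :
    (coeff k (φ * ψ)).trace = (coeff k (ψ * φ)).trace := by
  rw [coeff_mul, coeff_mul, Matrix.trace_sum, Matrix.trace_sum,
    ← Finset.Nat.sum_antidiagonal_swap]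
  exact Finset.sum_congr rfl fun p _ => Matrix.trace_mul_comm _ _

theorem trace_coeff_mul_commutator_eq_zero {u v : PowerSeries (Matrix ι ι R)}
    (hvu : v * u = 1) (huv : u * v = 1) (β : PowerSeries (Matrix ι ι R)) (k : ℕ) :
    (coeff k (v * (u * β - β * u))).trace = 0 := by
  rw [mul_sub, map_sub, Matrix.trace_sub, ← mul_assoc, hvu, one_mul, sub_eq_zero,
    trace_coeff_mul_comm, mul_assoc, huv, mul_one]

theorem trace_inv_constantCoeff_mul_coeff_commutator_eq_zero {α : PowerSeries (Matrix ι ι R)}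
    (hα : IsUnit (constantCoeff α)) (β : PowerSeries (Matrix ι ι R)) {m : ℕ}
    (hγ : ∀ i < m, coeff i (α * β - β * α) = 0) :
    ((constantCoeff α)⁻¹ * coeff m (α * β - β * α)).trace = 0 := by
  obtain ⟨A, hA⟩ := hα
  have hinv : (constantCoeff α)⁻¹ = constantCoeff (invOfUnit α A) := by
    rw [constantCoeff_invOfUnit, ← hA, Matrix.coe_units_inv]
  rw [hinv, ← coeff_mul_of_coeff_eq_zero_of_lt hγ]
  exact trace_coeff_mul_commutator_eq_zero (invOfUnit_mul α A hA.symm)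
    (mul_invOfUnit α A hA.symm) β m

end PowerSeries

theorem statement8_general {K : Type*} [Field K] (n m : ℕ)
    (a b : Polynomial (Matrix (Fin n) (Fin n) K))
    (had : a.natDegree ≤ m) (hbd : b.natDegree ≤ m)
    (hunit : IsUnit (a.coeff m))
    (hcomm : ∀ j : ℕ, m < j → j ≤ 2 * m → (a * b - b * a).coeff j = 0) :
    Matrix.trace ((a.coeff m)⁻¹ * (a * b - b * a).coeff m) = 0 := by
  set α : PowerSeries (Matrix (Fin n) (Fin n) K) := ↑(reflect m a)
  set β : PowerSeries (Matrix (Fin n) (Fin n) K) := ↑(reflect m b)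
  have hreflect : α * β - β * α = reflect (2 * m) (a * b - b * a) := by
    rw [reflect_sub, two_mul, reflect_mul _ _ had hbd, reflect_mul _ _ hbd had,
      ← coeToPowerSeries.ringHom_apply, map_sub, map_mul, map_mul]
    rfl
  have hcoeff : ∀ i ≤ 2 * m,
      PowerSeries.coeff i (α * β - β * α) = (a * b - b * a).coeff (2 * m - i) := by
    intro i hi
    rw [hreflect, coeff_coe, coeff_reflect, revAt_le hi]
  have hα : PowerSeries.constantCoeff α = a.coeff m := by
    rw [← PowerSeries.coeff_zero_eq_constantCoeff_apply, coeff_coe, coeff_reflect, revAt_zero]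
  have key := PowerSeries.trace_inv_constantCoeff_mul_coeff_commutator_eq_zero (hα ▸ hunit) β
    (m := m) fun i hi => by rw [hcoeff i (by omega)]; exact hcomm _ (by omega) (by omega)
  rwa [hα, hcoeff m (by omega), two_mul, Nat.add_sub_cancel] at key

/-- **Restatement of the vanishing of Φ (remark 3.4).**
Let `a(t) = a_m t^m + ⋯ + a_1 t` and `b(t) = b_m t^m + ⋯ + b_1 t` be polynomials with
coefficients in `M_n(K)`, zero constant term, `a_m` invertible. If the commutator
`[a(t), b(t)]` has degree at most `m` (its coefficients in degrees `m+1, …, 2m` vanish),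
and `c_m` is its coefficient of `t^m`, then `Tr(a_m⁻¹ c_m) = 0`. -/
theorem statement8 {K : Type*} [Field K] [CharZero K] (n m : ℕ) (hn : 1 ≤ n) (hm : 1 ≤ m)
    (a b : Polynomial (Matrix (Fin n) (Fin n) K))
    (ha0 : a.coeff 0 = 0) (hb0 : b.coeff 0 = 0)
    (had : a.natDegree ≤ m) (hbd : b.natDegree ≤ m)
    (hunit : IsUnit (a.coeff m))
    (hcomm : ∀ j : ℕ, m < j → j ≤ 2 * m → (a * b - b * a).coeff j = 0) :
    Matrix.trace ((a.coeff m)⁻¹ * (a * b - b * a).coeff m) = 0 :=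
  statement8_general n m a b had hbd hunit hcomm
end
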